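/- arXiv:1710.08213 — 4 statements merged into one kernel-verified Lean document; each statement's English description precedes it below -/
import Mathlib

section
/- Let G : ℝ → ℝ be nonnegative, even, integrable, C², with G, G', G'' bounded, and G'(x) < 0 for all x > 0, and let ε ≥ ∫_ℝ G(z) dz. Let ρ : ℝ × [0,∞) → [0,∞) be a C² classical solution of ∂_t ρ = ∂_x(ρ ∂_x(ε ρ − G*ρ)) such that for each t ≥ 0, ρ(·,t) is a probability density with compact support, and ρ(·,0) ∈ L²(ℝ). Then lim_{t→∞} ρ(x,t) = 0 for almost every x ∈ ℝ. -/
open MeasureTheory Real Set Filter Topology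

namespace AD

/-- Bundle of all the hypotheses we need. -/
structure Setup : Type where
  G : ℝ → ℝ
  ε : ℝ
  C : ℝ
  ρ : ℝ → ℝ → ℝ
  hGeven : ∀ x, G (-x) = G x
  hGbd : ∀ x, |G x| ≤ C
  hGsmooth : ContDiff ℝ 2 G
  hG'bd : ∀ x, |deriv G x| ≤ C
  hG''bd : ∀ x, |deriv (deriv G) x| ≤ C
  hG'neg : ∀ x > (0:ℝ), deriv G x < 0
  hρpos : ∀ x t, 0 ≤ ρ x t
  hρsmooth : ContDiffOn ℝ 2 (Function.uncurry ρ) (univ ×ˢ Ici 0)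
  hρprob : ∀ t ≥ (0:ℝ), ∫ x, ρ x t = 1
  hρsupp : ∀ t ≥ (0:ℝ), HasCompactSupport (fun x => ρ x t)
  hPDE : ∀ x : ℝ, ∀ t ≥ (0:ℝ),
      HasDerivAt (fun s => ρ x s)
        (deriv (fun y => ρ y t *
          deriv (fun y' => ε * ρ y' t - ∫ w, G (y' - w) * ρ w t) y) x) t

noncomputable section
variable (S : Setup)

/-- The open space-time domain. -/
def U : Set (ℝ × ℝ) := univ ×ˢ Ioi 0

/-- ρ uncurried. -/
def F : ℝ × ℝ → ℝ := Function.uncurry S.ρ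

/-- spatial derivative ∂ₓρ. -/
def P (x t : ℝ) : ℝ := fderiv ℝ (F S) (x, t) (1, 0)

/-- second spatial derivative ∂ₓₓρ. -/
def Q (x t : ℝ) : ℝ := fderiv ℝ (fderiv ℝ (F S)) (x, t) (1, 0) (1, 0)

/-- convolution of a kernel with ρ(·,t). -/
def K (g : ℝ → ℝ) (x t : ℝ) : ℝ := ∫ w, g (x - w) * S.ρ w t

lemma isOpen_U : IsOpen U := isOpen_univ.prod isOpen_Ioi

lemma mem_U {x t : ℝ} (ht : 0 < t) : (x, t) ∈ U := ⟨mem_univ _, ht⟩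

lemma C_nonneg : 0 ≤ S.C := le_trans (abs_nonneg _) (S.hG'bd 0)

lemma G'cont : Continuous (deriv S.G) :=
  (S.hGsmooth.iterate_deriv' 1 1).continuous

lemma G''cont : Continuous (deriv (deriv S.G)) :=
  (S.hGsmooth.iterate_deriv' 0 2).continuous

lemma G'odd (x : ℝ) : deriv S.G (-x) = - deriv S.G x := by
  have h1 : (fun y => S.G (-y)) = S.G := funext S.hGeven
  have h2 : deriv (fun y => S.G (-y)) x = - deriv S.G (-x) := deriv_comp_neg S.G x
  rw [h1] at h2
  linarith

lemma G'nonpos {x : ℝ} (hx : 0 ≤ x) : deriv S.G x ≤ 0 := by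
  rcases eq_or_lt_of_le hx with h | h
  · have h0 := G'odd S 0
    simp only [neg_zero] at h0
    subst h
    linarith
  · exact (S.hG'neg x h).le


/-! ### Regularity plumbing -/

lemma F_C2 : ContDiffOn ℝ 2 (F S) U :=
  S.hρsmooth.mono (prod_mono_right Ioi_subset_Ici_self)

lemma F_contOn : ContinuousOn (F S) U := (F_C2 S).continuousOn

lemma F_diffOn : DifferentiableOn ℝ (F S) U := (F_C2 S).differentiableOn (by norm_num)

lemma F_hasFDerivAt {p : ℝ × ℝ} (hp : p ∈ U) :
    HasFDerivAt (F S) (fderiv ℝ (F S) p) p :=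
  (((F_diffOn S) p hp).differentiableAt ((isOpen_U).mem_nhds hp)).hasFDerivAt

lemma fderiv_C1 : ContDiffOn ℝ 1 (fderiv ℝ (F S)) U :=
  (F_C2 S).fderiv_of_isOpen isOpen_U (by norm_num)

lemma fderiv_contOn : ContinuousOn (fderiv ℝ (F S)) U :=
  (F_C2 S).continuousOn_fderiv_of_isOpen isOpen_U (by norm_num)

lemma fderiv_hasFDerivAt {p : ℝ × ℝ} (hp : p ∈ U) :
    HasFDerivAt (fderiv ℝ (F S)) (fderiv ℝ (fderiv ℝ (F S)) p) p :=
  ((((fderiv_C1 S) p hp).differentiableWithinAt (by norm_num)).differentiableAt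
    ((isOpen_U).mem_nhds hp)).hasFDerivAt

lemma fderiv2_contOn : ContinuousOn (fderiv ℝ (fderiv ℝ (F S))) U :=
  (fderiv_C1 S).continuousOn_fderiv_of_isOpen isOpen_U (by norm_num)

lemma contOn_P : ContinuousOn (fun p : ℝ × ℝ => P S p.1 p.2) U := by
  have : ContinuousOn (fun p : ℝ × ℝ => fderiv ℝ (F S) p (1, 0)) U :=
    (fderiv_contOn S).clm_apply continuousOn_const
  simpa [P] using this

lemma contOn_Q : ContinuousOn (fun p : ℝ × ℝ => Q S p.1 p.2) U := by
  have : ContinuousOn (fun p : ℝ × ℝ => fderiv ℝ (fderiv ℝ (F S)) p (1, 0) (1, 0)) U :=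
    ((fderiv2_contOn S).clm_apply continuousOn_const).clm_apply continuousOn_const
  simpa [Q] using this

lemma contOn_rho : ContinuousOn (fun p : ℝ × ℝ => S.ρ p.1 p.2) U := F_contOn S

/-- the inclusion `y ↦ (y, t)` has derivative `(1,0)`. -/
lemma hasDerivAt_incl (t y : ℝ) : HasDerivAt (fun y : ℝ => (y, t)) ((1 : ℝ), (0 : ℝ)) y :=
  (hasDerivAt_id y).prodMk (hasDerivAt_const y t)

lemma hasDerivAt_slice {x t : ℝ} (ht : 0 < t) :
    HasDerivAt (fun y => S.ρ y t) (P S x t) x := by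
  have h := (F_hasFDerivAt S (mem_U ht : (x, t) ∈ U)).comp_hasDerivAt x (hasDerivAt_incl t x)
  exact h

lemma hasDerivAt_P {x t : ℝ} (ht : 0 < t) :
    HasDerivAt (fun y => P S y t) (Q S x t) x := by
  have h1 := (fderiv_hasFDerivAt S (mem_U ht : (x, t) ∈ U)).comp_hasDerivAt x
     (hasDerivAt_incl t x)
  have h2 := ((ContinuousLinearMap.apply ℝ ℝ ((1:ℝ), (0:ℝ))).hasFDerivAt).comp_hasDerivAt x h1
  exact h2

/-- the time derivative of `ρ x ·` computed via the joint derivative. -/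
lemma hasDerivAt_timeslice {x t : ℝ} (ht : 0 < t) :
    HasDerivAt (fun s => S.ρ x s) (fderiv ℝ (F S) (x, t) (0, 1)) t := by
  have h := (F_hasFDerivAt S (mem_U ht : (x, t) ∈ U)).comp_hasDerivAt t
    ((hasDerivAt_const t x).prodMk (hasDerivAt_id t))
  exact h

/-! ### Slice basic facts -/

lemma slice_cont {t : ℝ} (ht : 0 < t) : Continuous (fun x => S.ρ x t) := by
  rw [continuous_iff_continuousAt]
  intro x
  have h1 := (F_contOn S).continuousAt ((isOpen_U).mem_nhds (mem_U ht : (x, t) ∈ U))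
  have h2 : ContinuousAt (fun x : ℝ => ((x, t) : ℝ × ℝ)) x :=
    (continuous_id.prodMk continuous_const).continuousAt
  exact ContinuousAt.comp (f := fun x : ℝ => ((x, t) : ℝ × ℝ)) h1 h2

lemma slice_integrable {t : ℝ} (ht : 0 < t) : Integrable (fun x => S.ρ x t) :=
  (slice_cont S ht).integrable_of_hasCompactSupport (S.hρsupp t ht.le)

lemma slice_mass {t : ℝ} (ht : 0 < t) : ∫ x, S.ρ x t = 1 := S.hρprob t ht.le


/-! ### Convolution layer -/

lemma K_integrand_integrable {g : ℝ → ℝ} (hg : Continuous g) (hbd : ∀ w, |g w| ≤ S.C)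
    {t : ℝ} (ht : 0 < t) (x : ℝ) : Integrable (fun w => g (x - w) * S.ρ w t) := by
  have h : Integrable (fun w => g (x - w) * S.ρ w t) volume :=
    Integrable.bdd_mul (slice_integrable S ht)
      ((hg.comp (continuous_const.sub continuous_id)).aestronglyMeasurable)
      (c := S.C) (Eventually.of_forall fun w => by simpa [Real.norm_eq_abs] using hbd (x - w))
  exact h

lemma abs_K_le {g : ℝ → ℝ} (hg : Continuous g) (hbd : ∀ w, |g w| ≤ S.C)
    {t : ℝ} (ht : 0 < t) (x : ℝ) : |K S g x t| ≤ S.C := by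
  have h1 : |K S g x t| ≤ ∫ w, |g (x - w)| * |S.ρ w t| := by
    simpa [K, Real.norm_eq_abs, abs_mul] using
      norm_integral_le_integral_norm (μ := volume) (fun w => g (x - w) * S.ρ w t)
  have h2 : ∫ w, |g (x - w)| * |S.ρ w t| ≤ ∫ w, S.C * S.ρ w t := by
    refine integral_mono_of_nonneg
      (Eventually.of_forall fun w => mul_nonneg (abs_nonneg _) (abs_nonneg _))
      ((slice_integrable S ht).const_mul _) (Eventually.of_forall fun w => ?_)
    show |g (x - w)| * |S.ρ w t| ≤ S.C * S.ρ w t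
    rw [abs_of_nonneg (S.hρpos w t)]
    exact mul_le_mul_of_nonneg_right (hbd _) (S.hρpos w t)
  have h3 : ∫ w, S.C * S.ρ w t = S.C := by
    rw [integral_const_mul, slice_mass S ht, mul_one]
  linarith

lemma hasDerivAt_K {g g' : ℝ → ℝ} (hg : Continuous g) (hg' : Continuous g')
    (hd : ∀ w, HasDerivAt g (g' w) w) (hbg : ∀ w, |g w| ≤ S.C) (hbd : ∀ w, |g' w| ≤ S.C)
    {t : ℝ} (ht : 0 < t) (x : ℝ) :
    HasDerivAt (fun y => K S g y t) (K S g' x t) x := by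
  have h := hasDerivAt_integral_of_dominated_loc_of_deriv_le (μ := volume)
    (F := fun y w => g (y - w) * S.ρ w t) (F' := fun y w => g' (y - w) * S.ρ w t)
    (x₀ := x) (bound := fun w => S.C * S.ρ w t) (s := Metric.ball x 1) (Metric.ball_mem_nhds x one_pos)
    (Eventually.of_forall fun y =>
      (K_integrand_integrable S hg hbg ht y).aestronglyMeasurable)
    (K_integrand_integrable S hg hbg ht x)
    (K_integrand_integrable S hg' hbd ht x).aestronglyMeasurable
    (Eventually.of_forall fun w y _ => by
      show ‖g' (y - w) * S.ρ w t‖ ≤ S.C * S.ρ w t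
      rw [Real.norm_eq_abs, abs_mul, abs_of_nonneg (S.hρpos w t)]
      exact mul_le_mul_of_nonneg_right (hbd _) (S.hρpos w t))
    ((slice_integrable S ht).const_mul _)
    (Eventually.of_forall fun w y _ => by
      have h1 : HasDerivAt (fun y => g (y - w)) (g' (y - w)) y := by
        simpa [Function.comp_def] using (hd (y - w)).comp y ((hasDerivAt_id y).sub_const w)
      exact h1.mul_const _)
  exact h.2


/-! ### L¹ tightness estimate and time-continuity of convolutions -/

lemma L1_split {t t₀ : ℝ} (ht : 0 < t) (ht₀ : 0 < t₀) {A : Set ℝ} (hA : MeasurableSet A)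
    (hzero : ∀ w, w ∉ A → S.ρ w t₀ = 0) :
    ∫ w, |S.ρ w t - S.ρ w t₀| ≤ 2 * ∫ w in A, |S.ρ w t - S.ρ w t₀| := by
  have hdint : Integrable (fun w => |S.ρ w t - S.ρ w t₀|) :=
    ((slice_integrable S ht).sub (slice_integrable S ht₀)).abs
  have h1 : ∫ w, |S.ρ w t - S.ρ w t₀|
      = (∫ w in A, |S.ρ w t - S.ρ w t₀|) + ∫ w in Aᶜ, |S.ρ w t - S.ρ w t₀| :=
    (integral_add_compl hA hdint).symm
  have h2 : ∫ w in Aᶜ, |S.ρ w t - S.ρ w t₀| = ∫ w in Aᶜ, S.ρ w t := by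
    refine setIntegral_congr_fun hA.compl (fun w hw => ?_)
    rw [hzero w hw, sub_zero, abs_of_nonneg (S.hρpos w t)]
  have h3 : (∫ w in A, S.ρ w t) + ∫ w in Aᶜ, S.ρ w t = 1 := by
    rw [integral_add_compl hA (slice_integrable S ht), slice_mass S ht]
  have h4 : ∫ w in A, S.ρ w t₀ = 1 := by
    have hc : ∫ w in Aᶜ, S.ρ w t₀ = 0 := by
      rw [setIntegral_congr_fun hA.compl (fun w hw => hzero w hw)]
      simp
    have := integral_add_compl hA (slice_integrable S ht₀)
    rw [hc, add_zero, slice_mass S ht₀] at this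
    exact this
  have h5 : (∫ w in A, S.ρ w t₀) - ∫ w in A, S.ρ w t ≤ ∫ w in A, |S.ρ w t - S.ρ w t₀| := by
    rw [← integral_sub ((slice_integrable S ht₀).integrableOn)
      ((slice_integrable S ht).integrableOn)]
    refine setIntegral_mono_on
      (((slice_integrable S ht₀).integrableOn).sub ((slice_integrable S ht).integrableOn))
      (hdint.integrableOn) hA (fun w _ => ?_)
    have := abs_sub_abs_le_abs_sub (S.ρ w t₀) (S.ρ w t)
    have h6 := neg_abs_le (S.ρ w t - S.ρ w t₀)
    have h7 : |S.ρ w t₀ - S.ρ w t| = |S.ρ w t - S.ρ w t₀| := abs_sub_comm _ _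
    nlinarith [abs_sub_abs_le_abs_sub (S.ρ w t₀) (S.ρ w t), le_abs_self (S.ρ w t₀ - S.ρ w t)]
  linarith

lemma K_tcont {g : ℝ → ℝ} (hg : Continuous g) (hbd : ∀ w, |g w| ≤ S.C) (x : ℝ)
    {t₀ : ℝ} (ht₀ : 0 < t₀) : ContinuousAt (fun t => K S g x t) t₀ := by
  -- compact set beyond which ρ(·,t₀) vanishes
  obtain ⟨R, hR⟩ : ∃ R : ℝ, tsupport (fun w => S.ρ w t₀) ⊆ Icc (-R) R := by
    obtain ⟨R, hR⟩ := (S.hρsupp t₀ ht₀.le).isCompact.isBounded.subset_closedBall 0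
    refine ⟨R, fun w hw => ?_⟩
    · have := hR hw
      simp only [Metric.mem_closedBall, Real.dist_eq, sub_zero] at this
      exact ⟨neg_le_of_abs_le this, le_of_abs_le this⟩
  set A : Set ℝ := Icc (-R) R with hAdef
  have hA : MeasurableSet A := measurableSet_Icc
  have hzero : ∀ t₁, ∀ w, w ∉ A → S.ρ w t₁ = 0 → True := fun _ _ _ _ => trivial
  have hz₀ : ∀ w, w ∉ A → S.ρ w t₀ = 0 := fun w hw =>
    image_eq_zero_of_notMem_tsupport (f := fun w => S.ρ w t₀) (fun hc => hw (hR hc))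
  -- the local-in-time L¹ distance over the window A
  set J : ℝ → ℝ := fun t => ∫ w in A, |S.ρ w t - S.ρ w t₀| with hJdef
  -- J is continuous at t₀ and J t₀ = 0
  have hJ0 : J t₀ = 0 := by simp [hJdef]
  have hJcont : ContinuousAt J t₀ := by
    -- uniform bound on a compact space-time box
    have hbox : IsCompact (A ×ˢ Icc (t₀/2) (t₀+1)) := isCompact_Icc.prod isCompact_Icc
    have hboxU : (A ×ˢ Icc (t₀/2) (t₀+1)) ⊆ U :=
      fun p hp => ⟨mem_univ _, lt_of_lt_of_le (by linarith) hp.2.1⟩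
    obtain ⟨M, hM⟩ := hbox.exists_bound_of_continuousOn ((F_contOn S).mono hboxU)
    refine continuousAt_of_dominated (bound := fun w => A.indicator (fun _ => 2 * M) w)
      ?_ ?_ ?_ ?_
    · filter_upwards [(Icc_mem_nhds (by linarith) (by linarith) :
        Icc (t₀/2) (t₀+1) ∈ 𝓝 t₀)] with t ht
      have htpos : 0 < t := lt_of_lt_of_le (by linarith) (ht.1 : t₀/2 ≤ t)
      exact (((slice_cont S htpos).sub (slice_cont S ht₀)).abs).aestronglyMeasurable
    · filter_upwards [(Icc_mem_nhds (by linarith) (by linarith) :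
        Icc (t₀/2) (t₀+1) ∈ 𝓝 t₀)] with t ht
      refine (ae_restrict_iff' hA).2 (Eventually.of_forall (fun w hw => ?_))
      rw [indicator_of_mem hw]
      have h1 := hM (w, t) ⟨hw, ht⟩
      have h2 := hM (w, t₀) ⟨hw, ⟨by linarith, by linarith⟩⟩
      simp only [Real.norm_eq_abs, abs_abs] at h1 h2 ⊢
      calc |S.ρ w t - S.ρ w t₀| ≤ |S.ρ w t| + |S.ρ w t₀| := abs_sub _ _
        _ ≤ M + M := add_le_add h1 h2
        _ = 2 * M := by ring
    · rw [integrable_indicator_iff hA]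
      exact integrableOn_const measure_Icc_lt_top.ne
    · refine (ae_restrict_iff' hA).2 (Eventually.of_forall (fun w _ => ?_))
      have hc : ContinuousAt (fun t => S.ρ w t) t₀ := by
        have h1 := (F_contOn S).continuousAt ((isOpen_U).mem_nhds (mem_U ht₀ : (w, t₀) ∈ U))
        exact ContinuousAt.comp (f := fun t : ℝ => ((w, t) : ℝ × ℝ)) h1
          ((continuous_const.prodMk continuous_id).continuousAt)
      exact (hc.sub continuousAt_const).abs
  -- the key estimate
  have hest : ∀ t > (0:ℝ), |K S g x t - K S g x t₀| ≤ 2 * S.C * J t := by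
    intro t ht
    have hdint : Integrable (fun w => S.ρ w t - S.ρ w t₀) :=
      (slice_integrable S ht).sub (slice_integrable S ht₀)
    have h1 : K S g x t - K S g x t₀ = ∫ w, g (x - w) * (S.ρ w t - S.ρ w t₀) := by
      rw [show (fun w => g (x - w) * (S.ρ w t - S.ρ w t₀))
          = fun w => g (x - w) * S.ρ w t - g (x - w) * S.ρ w t₀ by
          funext w; ring]
      rw [integral_sub (K_integrand_integrable S hg hbd ht x)
        (K_integrand_integrable S hg hbd ht₀ x)]
      rfl
    rw [h1]
    calc |∫ w, g (x - w) * (S.ρ w t - S.ρ w t₀)|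
        ≤ ∫ w, |g (x - w)| * |S.ρ w t - S.ρ w t₀| := by
          simpa [Real.norm_eq_abs, abs_mul] using
            norm_integral_le_integral_norm (μ := volume)
              (fun w => g (x - w) * (S.ρ w t - S.ρ w t₀))
      _ ≤ ∫ w, S.C * |S.ρ w t - S.ρ w t₀| := by
          refine integral_mono_of_nonneg
            (Eventually.of_forall fun w => mul_nonneg (abs_nonneg _) (abs_nonneg _))
            (hdint.abs.const_mul _) (Eventually.of_forall fun w => ?_)
          exact mul_le_mul_of_nonneg_right (hbd _) (abs_nonneg _)
      _ = S.C * ∫ w, |S.ρ w t - S.ρ w t₀| := integral_const_mul _ _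
      _ ≤ S.C * (2 * J t) := by
          refine mul_le_mul_of_nonneg_left ?_ (C_nonneg S)
          exact L1_split S ht ht₀ hA hz₀
      _ = 2 * S.C * J t := by ring
  -- put it together
  have h2 : Tendsto (fun t => 2 * S.C * J t) (𝓝 t₀) (𝓝 0) := by
    have := hJcont.tendsto
    rw [hJ0] at this
    simpa using (this.const_mul (2 * S.C))
  rw [ContinuousAt, tendsto_iff_dist_tendsto_zero]
  refine squeeze_zero' ?_ ?_ h2
  · exact Eventually.of_forall fun t => dist_nonneg
  · filter_upwards [eventually_gt_nhds ht₀] with t ht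
    rw [Real.dist_eq]
    exact hest t ht


/-! ### Kernel instances -/

lemma G_hasDeriv (w : ℝ) : HasDerivAt S.G (deriv S.G w) w :=
  ((S.hGsmooth.differentiable (by norm_num)) w).hasDerivAt

lemma G'_hasDeriv (w : ℝ) : HasDerivAt (deriv S.G) (deriv (deriv S.G) w) w := by
  have h : ContDiff ℝ 1 (deriv S.G) := by
    have := S.hGsmooth.iterate_deriv' 1 1
    rwa [Function.iterate_one] at this
  exact ((h.differentiable (by norm_num)) w).hasDerivAt

lemma hasDerivAt_K0 {t : ℝ} (ht : 0 < t) (x : ℝ) :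
    HasDerivAt (fun y => K S S.G y t) (K S (deriv S.G) x t) x :=
  hasDerivAt_K S S.hGsmooth.continuous (G'cont S) (G_hasDeriv S) S.hGbd S.hG'bd ht x

lemma hasDerivAt_K1 {t : ℝ} (ht : 0 < t) (x : ℝ) :
    HasDerivAt (fun y => K S (deriv S.G) y t) (K S (deriv (deriv S.G)) x t) x :=
  hasDerivAt_K S (G'cont S) (G''cont S) (G'_hasDeriv S) S.hG'bd S.hG''bd ht x

lemma abs_K1_le {t : ℝ} (ht : 0 < t) (x : ℝ) : |K S (deriv S.G) x t| ≤ S.C :=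
  abs_K_le S (G'cont S) S.hG'bd ht x

lemma abs_K2_le {t : ℝ} (ht : 0 < t) (x : ℝ) : |K S (deriv (deriv S.G)) x t| ≤ S.C :=
  abs_K_le S (G''cont S) S.hG''bd ht x

/-! ### PDE unfolding -/

lemma pde_unfold (x : ℝ) {t : ℝ} (ht : 0 < t) :
    HasDerivAt (fun s => S.ρ x s)
      (P S x t * (S.ε * P S x t - K S (deriv S.G) x t)
        + S.ρ x t * (S.ε * Q S x t - K S (deriv (deriv S.G)) x t)) t := by
  have hin : ∀ y : ℝ, HasDerivAt (fun y' => S.ε * S.ρ y' t - ∫ w, S.G (y' - w) * S.ρ w t)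
      (S.ε * P S y t - K S (deriv S.G) y t) y := fun y =>
    ((hasDerivAt_slice S ht (x := y)).const_mul S.ε).sub (hasDerivAt_K0 S ht y)
  have hde : (fun y => S.ρ y t * deriv (fun y' => S.ε * S.ρ y' t
        - ∫ w, S.G (y' - w) * S.ρ w t) y)
      = fun y => S.ρ y t * (S.ε * P S y t - K S (deriv S.G) y t) := by
    funext y
    rw [(hin y).deriv]
  have hout : HasDerivAt (fun y => S.ρ y t * (S.ε * P S y t - K S (deriv S.G) y t))
      (P S x t * (S.ε * P S x t - K S (deriv S.G) x t)
        + S.ρ x t * (S.ε * Q S x t - K S (deriv (deriv S.G)) x t)) x :=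
    (hasDerivAt_slice S ht).mul
      (((hasDerivAt_P S ht).const_mul S.ε).sub (hasDerivAt_K1 S ht x))
  have h0 := S.hPDE x t ht.le
  rw [hde, hout.deriv] at h0
  exact h0

/-! ### The ODE field -/

/-- the (time-extended) drift field. -/
def vF (t x : ℝ) : ℝ := K S (deriv S.G) x (max t 1)

lemma vF_eq {t : ℝ} (ht : 1 ≤ t) (x : ℝ) : vF S t x = K S (deriv S.G) x t := by
  rw [vF, max_eq_left ht]

lemma vF_lipschitz (t : ℝ) : LipschitzWith (Real.toNNReal S.C) (vF S t) := by
  have hpos : (0:ℝ) < max t 1 := lt_of_lt_of_le one_pos (le_max_right _ _)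
  refine lipschitzWith_of_nnnorm_deriv_le
    (fun x => ((hasDerivAt_K1 S hpos x).differentiableAt)) (fun x => ?_)
  have hd : HasDerivAt (vF S t) (K S (deriv (deriv S.G)) x (max t 1)) x :=
    hasDerivAt_K1 S hpos x
  rw [hd.deriv, ← NNReal.coe_le_coe, coe_nnnorm,
    Real.coe_toNNReal _ (C_nonneg S), Real.norm_eq_abs]
  exact abs_K2_le S hpos x

lemma vF_bound (t x : ℝ) : |vF S t x| ≤ S.C := by
  have hpos : (0:ℝ) < max t 1 := lt_of_lt_of_le one_pos (le_max_right _ _)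
  rw [vF]
  exact abs_K1_le S hpos x

lemma vF_cont_t (x : ℝ) : Continuous (fun t => vF S t x) := by
  rw [continuous_iff_continuousAt]
  intro t
  have h1 : ContinuousAt (fun s => K S (deriv S.G) x s) (max t 1) :=
    K_tcont S (G'cont S) S.hG'bd x (lt_of_lt_of_le one_pos (le_max_right _ _))
  exact ContinuousAt.comp (f := fun t : ℝ => max t 1) h1
    ((continuous_id.max continuous_const).continuousAt)

/-- Existence of trajectories of the drift field through any point of `[1,T] × ℝ`. -/
lemma exists_traj {T t₀ : ℝ} (hT : 1 ≤ T) (ht₀ : t₀ ∈ Icc 1 T) (x₀ : ℝ) :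
    ∃ X : ℝ → ℝ, X t₀ = x₀ ∧
      ∀ t ∈ Icc 1 T, HasDerivWithinAt X (vF S t (X t)) (Icc 1 T) t := by
  have hpl : IsPicardLindelof (vF S) (tmin := 1) (tmax := T) ⟨t₀, ht₀⟩ x₀
      (Real.toNNReal (S.C * T + 1)) 0 (Real.toNNReal S.C) (Real.toNNReal S.C) := by
    constructor
    · exact fun t _ => (vF_lipschitz S t).lipschitzOnWith
    · exact fun x _ => (vF_cont_t S x).continuousOn
    · intro t _ x _
      rw [Real.norm_eq_abs]
      exact (vF_bound S t x).trans (Real.le_coe_toNNReal _)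
    · have h1 : max (T - t₀) (t₀ - 1) ≤ T := by
        rcases ht₀ with ⟨h1, h2⟩
        apply max_le <;> linarith
      have h0 : 0 ≤ S.C * T + 1 := by
        nlinarith [C_nonneg S, mul_nonneg (C_nonneg S) (le_trans zero_le_one hT)]
      simp only [NNReal.coe_zero, sub_zero, Real.coe_toNNReal _ (C_nonneg S),
        Real.coe_toNNReal _ h0]
      nlinarith [C_nonneg S, mul_le_mul_of_nonneg_left h1 (C_nonneg S)]
  exact hpl.exists_eq_forall_mem_Icc_hasDerivWithinAt₀

/-- Uniqueness / no-crossing of trajectories. -/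
lemma traj_unique {T : ℝ} (hT : 1 ≤ T) {X Y : ℝ → ℝ}
    (hX : ∀ t ∈ Icc 1 T, HasDerivWithinAt X (vF S t (X t)) (Icc 1 T) t)
    (hY : ∀ t ∈ Icc 1 T, HasDerivWithinAt Y (vF S t (Y t)) (Icc 1 T) t)
    {s : ℝ} (hs : s ∈ Icc 1 T) (hXY : X s = Y s) : EqOn X Y (Icc 1 T) := by
  have hv : ∀ t, LipschitzOnWith (Real.toNNReal S.C) (vF S t)
      ((fun _ => (univ : Set ℝ)) t) := fun t => lipschitzOnWith_univ.2 (vF_lipschitz S t)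
  have hcX : ContinuousOn X (Icc 1 T) := fun t ht => (hX t ht).continuousWithinAt
  have hcY : ContinuousOn Y (Icc 1 T) := fun t ht => (hY t ht).continuousWithinAt
  -- derivative conversions
  have hXr : ∀ t ∈ Ico s T, HasDerivWithinAt X (vF S t (X t)) (Ici t) t := by
    intro t ht
    have h1 : t ∈ Icc 1 T := ⟨le_trans hs.1 ht.1, ht.2.le⟩
    refine (hX t h1).mono_of_mem_nhdsWithin ?_
    have : Ici t ∩ Iio T ∈ 𝓝[Ici t] t :=
      inter_mem_nhdsWithin _ (Iio_mem_nhds ht.2)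
    exact mem_of_superset this (fun u hu => ⟨le_trans h1.1 hu.1, hu.2.le⟩)
  have hYr : ∀ t ∈ Ico s T, HasDerivWithinAt Y (vF S t (Y t)) (Ici t) t := by
    intro t ht
    have h1 : t ∈ Icc 1 T := ⟨le_trans hs.1 ht.1, ht.2.le⟩
    refine (hY t h1).mono_of_mem_nhdsWithin ?_
    have : Ici t ∩ Iio T ∈ 𝓝[Ici t] t :=
      inter_mem_nhdsWithin _ (Iio_mem_nhds ht.2)
    exact mem_of_superset this (fun u hu => ⟨le_trans h1.1 hu.1, hu.2.le⟩)
  have hXl : ∀ t ∈ Ioc 1 s, HasDerivWithinAt X (vF S t (X t)) (Iic t) t := by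
    intro t ht
    have h1 : t ∈ Icc 1 T := ⟨ht.1.le, le_trans ht.2 hs.2⟩
    refine (hX t h1).mono_of_mem_nhdsWithin ?_
    have : Iic t ∩ Ioi 1 ∈ 𝓝[Iic t] t :=
      inter_mem_nhdsWithin _ (Ioi_mem_nhds ht.1)
    exact mem_of_superset this (fun u hu => ⟨hu.2.le, le_trans hu.1 h1.2⟩)
  have hYl : ∀ t ∈ Ioc 1 s, HasDerivWithinAt Y (vF S t (Y t)) (Iic t) t := by
    intro t ht
    have h1 : t ∈ Icc 1 T := ⟨ht.1.le, le_trans ht.2 hs.2⟩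
    refine (hY t h1).mono_of_mem_nhdsWithin ?_
    have : Iic t ∩ Ioi 1 ∈ 𝓝[Iic t] t :=
      inter_mem_nhdsWithin _ (Ioi_mem_nhds ht.1)
    exact mem_of_superset this (fun u hu => ⟨hu.2.le, le_trans hu.1 h1.2⟩)
  -- right of s
  have hright : EqOn X Y (Icc s T) :=
    ODE_solution_unique_of_mem_Icc_right (fun t _ => hv t)
      (hcX.mono (Icc_subset_Icc_left hs.1)) hXr (fun t _ => mem_univ _)
      (hcY.mono (Icc_subset_Icc_left hs.1)) hYr (fun t _ => mem_univ _) hXY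
  -- left of s
  have hleft : EqOn X Y (Icc 1 s) :=
    ODE_solution_unique_of_mem_Icc_left (fun t _ => hv t)
      (hcX.mono (Icc_subset_Icc_right hs.2)) hXl (fun t _ => mem_univ _)
      (hcY.mono (Icc_subset_Icc_right hs.2)) hYl (fun t _ => mem_univ _) hXY
  intro t ht
  rcases le_total t s with h | h
  · exact hleft ⟨ht.1, h⟩
  · exact hright ⟨h, ht.2⟩

/-- For a nonneg C² function with `|f''| ≤ K` near `x` and `|f' x| ≤ K δ`,
one has `(f' x)² ≤ 2 K f(x)`. -/
lemma taylor_sq {f f' f'' : ℝ → ℝ} {x δ K : ℝ} (hδ : 0 < δ) (hK : 0 < K)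
    (hd1 : ∀ y ∈ Icc (x - δ) (x + δ), HasDerivAt f (f' y) y)
    (hd2 : ∀ y ∈ Icc (x - δ) (x + δ), HasDerivAt f' (f'' y) y)
    (hbd : ∀ y ∈ Icc (x - δ) (x + δ), |f'' y| ≤ K)
    (hpos : ∀ y ∈ Icc (x - δ) (x + δ), 0 ≤ f y)
    (hsmall : |f' x| ≤ K * δ) :
    f' x ^ 2 ≤ 2 * K * f x := by
  have hxmem : x ∈ Icc (x - δ) (x + δ) := ⟨by linarith, by linarith⟩
  -- Lipschitz bound for f' on the interval
  have hlip : ∀ y ∈ Icc (x - δ) (x + δ), |f' y - f' x| ≤ K * |y - x| := by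
    intro y hy
    have := Convex.norm_image_sub_le_of_norm_hasDerivWithin_le
      (f := f') (f' := f'') (C := K) (s := Icc (x - δ) (x + δ))
      (fun z hz => (hd2 z hz).hasDerivWithinAt)
      (fun z hz => by rw [Real.norm_eq_abs]; exact hbd z hz)
      (convex_Icc _ _) hxmem hy
    simpa [Real.norm_eq_abs] using this
  -- the comparison function
  set φ : ℝ → ℝ := fun y => f x + f' x * (y - x) + K / 2 * (y - x) ^ 2 - f y with hφdef
  have hφx : φ x = 0 := by simp [hφdef]
  have hφd : ∀ y ∈ Icc (x - δ) (x + δ),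
      HasDerivAt φ (f' x + K * (y - x) - f' y) y := by
    intro y hy
    have hid : HasDerivAt (fun y : ℝ => y - x) 1 y := by
      simpa using (hasDerivAt_id y).sub_const x
    have h1 := (((hasDerivAt_const y (f x)).add
        (hid.const_mul (f' x))).add
        ((hid.fun_pow 2).const_mul (K / 2))).sub (hd1 y hy)
    exact h1.congr_deriv (by norm_num; ring)
  have hmain : ∀ h : ℝ, |h| ≤ δ → f (x + h) ≤ f x + f' x * h + K / 2 * h ^ 2 := by
    intro h hh
    have hmem : x + h ∈ Icc (x - δ) (x + δ) := by
      constructor <;> [linarith [neg_le_of_abs_le hh]; linarith [le_of_abs_le hh]]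
    rcases le_total 0 h with h0 | h0
    · -- monotone on [x, x+h]
      have hsub : Icc x (x + h) ⊆ Icc (x - δ) (x + δ) := by
        apply Icc_subset_Icc <;> linarith [le_of_abs_le hh]
      have hmono : MonotoneOn φ (Icc x (x + h)) := by
        refine monotoneOn_of_deriv_nonneg (convex_Icc _ _) ?_ ?_ ?_
        · exact fun z hz => ((hφd z (hsub hz)).continuousAt).continuousWithinAt
        · intro z hz
          rw [interior_Icc] at hz
          exact ((hφd z (hsub (Ioo_subset_Icc_self hz))).differentiableAt).differentiableWithinAt
        · intro z hz
          rw [interior_Icc] at hz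
          have hz' := hsub (Ioo_subset_Icc_self hz)
          rw [(hφd z hz').deriv]
          have := hlip z hz'
          have hzx : 0 ≤ z - x := by linarith [hz.1]
          rw [abs_of_nonneg hzx] at this
          have := le_of_abs_le this
          have h2 : f' z - f' x ≤ K * (z - x) := by
            have := abs_le.1 (hlip z hz')
            linarith [this.2]
          linarith
      have := hmono (left_mem_Icc.2 (by linarith)) (right_mem_Icc.2 (by linarith))
        (by linarith)
      rw [hφx] at this
      simp only [hφdef] at this
      linarith
    · -- antitone on [x+h, x]
      have hsub : Icc (x + h) x ⊆ Icc (x - δ) (x + δ) := by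
        apply Icc_subset_Icc <;> linarith [neg_le_of_abs_le hh]
      have hmono : AntitoneOn φ (Icc (x + h) x) := by
        refine antitoneOn_of_deriv_nonpos (convex_Icc _ _) ?_ ?_ ?_
        · exact fun z hz => ((hφd z (hsub hz)).continuousAt).continuousWithinAt
        · intro z hz
          rw [interior_Icc] at hz
          exact ((hφd z (hsub (Ioo_subset_Icc_self hz))).differentiableAt).differentiableWithinAt
        · intro z hz
          rw [interior_Icc] at hz
          have hz' := hsub (Ioo_subset_Icc_self hz)
          rw [(hφd z hz').deriv]
          have h2 : f' x - f' z ≤ K * (x - z) := by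
            have h3 := abs_le.1 (hlip z hz')
            have hzx : z - x ≤ 0 := by linarith [hz.2]
            rw [abs_of_nonpos hzx] at h3
            linarith [h3.1]
          linarith
      have := hmono (left_mem_Icc.2 (by linarith)) (right_mem_Icc.2 (by linarith))
        (by linarith)
      rw [hφx] at this
      simp only [hφdef] at this
      linarith
  -- plug in h := - f' x / K
  have hh : |(- f' x / K)| ≤ δ := by
    rw [abs_div, abs_neg, abs_of_pos hK, div_le_iff₀ hK]
    linarith [hsmall]
  have h1 := hmain _ hh
  have h2 := hpos _ (⟨by nlinarith [neg_le_of_abs_le hh], by nlinarith [le_of_abs_le hh]⟩ :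
    x + (- f' x / K) ∈ Icc (x - δ) (x + δ))
  have hKne : K ≠ 0 := ne_of_gt hK
  have : f x + f' x * (- f' x / K) + K / 2 * (- f' x / K) ^ 2
      = f x - f' x ^ 2 / (2 * K) := by
    field_simp
    ring
  rw [this] at h1
  have h4 : 0 ≤ f x - f' x ^ 2 / (2 * K) := le_trans h2 h1
  have h5 : f' x ^ 2 / (2 * K) ≤ f x := by linarith
  calc f' x ^ 2 = (f' x ^ 2 / (2 * K)) * (2 * K) := by field_simp
    _ ≤ f x * (2 * K) := by nlinarith
    _ = 2 * K * f x := by ring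


/-- Converting an `Icc`-solution derivative to a right-derivative. -/
lemma sol_deriv_Ici {T : ℝ} {Y : ℝ → ℝ}
    (hY : ∀ t ∈ Icc 1 T, HasDerivWithinAt Y (vF S t (Y t)) (Icc 1 T) t)
    {t : ℝ} (ht : t ∈ Ico 1 T) : HasDerivWithinAt Y (vF S t (Y t)) (Ici t) t := by
  refine (hY t ⟨ht.1, ht.2.le⟩).mono_of_mem_nhdsWithin ?_
  have h : Ici t ∩ Iio T ∈ 𝓝[Ici t] t := inter_mem_nhdsWithin _ (Iio_mem_nhds ht.2)
  exact mem_of_superset h (fun u hu => ⟨le_trans ht.1 hu.1, hu.2.le⟩)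

/-- **Invariance of zeros along trajectories.** -/
lemma invariance {T : ℝ} (hT : 1 ≤ T) {Y : ℝ → ℝ}
    (hY : ∀ t ∈ Icc 1 T, HasDerivWithinAt Y (vF S t (Y t)) (Icc 1 T) t)
    (h0 : S.ρ (Y 1) 1 = 0) : ∀ t ∈ Icc 1 T, S.ρ (Y t) t = 0 := by
  have hYc : ContinuousOn Y (Icc 1 T) := fun t ht => (hY t ht).continuousWithinAt
  set w : ℝ → ℝ := fun t => S.ρ (Y t) t with hwdef
  have hwc : ContinuousOn w (Icc 1 T) := by
    have h1 : ContinuousOn (fun t : ℝ => ((Y t, t) : ℝ × ℝ)) (Icc 1 T) :=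
      hYc.prodMk continuousOn_id
    refine ContinuousOn.comp (F_contOn S) h1 (fun t ht => ?_)
    exact mem_U (lt_of_lt_of_le one_pos ht.1)
  set Z : Set ℝ := {t ∈ Icc 1 T | ∀ s ∈ Icc 1 t, w s = 0} with hZdef
  have h1Z : (1:ℝ) ∈ Z := by
    refine ⟨⟨le_refl _, hT⟩, fun s hs => ?_⟩
    have : s = 1 := le_antisymm hs.2 hs.1
    rw [this]
    exact h0
  have hZne : Z.Nonempty := ⟨1, h1Z⟩
  have hZbdd : BddAbove Z := ⟨T, fun z hz => hz.1.2⟩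
  set τ := sSup Z with hτdef
  have hτ1 : 1 ≤ τ := le_csSup hZbdd h1Z
  have hτT : τ ≤ T := csSup_le hZne (fun z hz => hz.1.2)
  have hτmem : τ ∈ Icc 1 T := ⟨hτ1, hτT⟩
  -- w vanishes on [1, τ)
  have hwlt : ∀ s, 1 ≤ s → s < τ → w s = 0 := by
    intro s hs1 hsτ
    obtain ⟨z, hzZ, hsz⟩ := exists_lt_of_lt_csSup hZne hsτ
    exact hzZ.2 s ⟨hs1, hsz.le⟩
  -- w τ = 0 by continuity
  have hwτ : w τ = 0 := by
    rcases eq_or_lt_of_le hτ1 with h | h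
    · rw [← h]; exact h0
    · have hne : (𝓝[Ioo 1 τ] τ).NeBot := by
        refine mem_closure_iff_nhdsWithin_neBot.1 ?_
        rw [closure_Ioo (ne_of_lt h)]
        exact ⟨h.le, le_refl _⟩
      have htend : Tendsto w (𝓝[Ioo 1 τ] τ) (𝓝 (w τ)) := by
        have hsub : Ioo 1 τ ⊆ Icc 1 T := fun u hu => ⟨hu.1.le, le_trans hu.2.le hτT⟩
        exact ((hwc τ hτmem).mono hsub)
      have htend0 : Tendsto w (𝓝[Ioo 1 τ] τ) (𝓝 0) := by
        refine Tendsto.congr' ?_ tendsto_const_nhds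
        filter_upwards [self_mem_nhdsWithin] with s hs
        exact (hwlt s hs.1.le hs.2).symm
      exact tendsto_nhds_unique htend htend0
  have hτZ : τ ∈ Z := by
    refine ⟨hτmem, fun s hs => ?_⟩
    rcases eq_or_lt_of_le hs.2 with h | h
    · rw [h]; exact hwτ
    · exact hwlt s hs.1 h
  -- Main claim : τ = T
  rcases eq_or_lt_of_le hτT with hfin | hτltT
  · intro t ht
    exact hτZ.2 t ⟨ht.1, by rw [hfin]; exact ht.2⟩
  -- towards a contradiction, extend the zero set beyond τ
  exfalso
  have hp₀ : ((Y τ, τ) : ℝ × ℝ) ∈ U := mem_U (lt_of_lt_of_le one_pos hτ1)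
  -- bound for Q on a compact box around (Y τ, τ)
  have hbox : IsCompact ((Icc (Y τ - 1) (Y τ + 1)) ×ˢ (Icc (τ/2) (τ + 1))) :=
    isCompact_Icc.prod isCompact_Icc
  have hboxU : ((Icc (Y τ - 1) (Y τ + 1)) ×ˢ (Icc (τ/2) (τ + 1))) ⊆ U :=
    fun p hp => ⟨mem_univ _, lt_of_lt_of_le (by linarith) hp.2.1⟩
  obtain ⟨MQ, hMQ⟩ := hbox.exists_bound_of_continuousOn ((contOn_Q S).mono hboxU)
  set KQ := MQ + 1 with hKQdef
  have hKQ1 : 1 ≤ KQ := by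
    have := hMQ (Y τ, τ) ⟨⟨by linarith, by linarith⟩, ⟨by linarith, by linarith⟩⟩
    have h2 := norm_nonneg (Q S (Y τ) τ)
    simp only [hKQdef]
    nlinarith [le_trans h2 this]
  have hKQpos : (0:ℝ) < KQ := lt_of_lt_of_le one_pos hKQ1
  -- P vanishes at (Y τ, τ)
  have hPτ : P S (Y τ) τ = 0 := by
    have hmin : IsLocalMin (fun y => S.ρ y τ) (Y τ) := by
      have hz : S.ρ (Y τ) τ = 0 := hwτ
      refine Eventually.of_forall (fun y => ?_)
      show S.ρ (Y τ) τ ≤ S.ρ y τ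
      rw [hz]
      exact S.hρpos y τ
    have := hmin.deriv_eq_zero
    rwa [(hasDerivAt_slice S (lt_of_lt_of_le one_pos hτ1) (x := Y τ)).deriv] at this
  -- pick a small right-neighbourhood where the smallness conditions hold
  have hPcont : ContinuousWithinAt (fun t : ℝ => P S (Y t) t) (Icc 1 T) τ := by
    have h1 : ContinuousWithinAt (fun t : ℝ => ((Y t, t) : ℝ × ℝ)) (Icc 1 T) τ :=
      ((hYc τ hτmem).prodMk continuousWithinAt_id)
    refine ContinuousWithinAt.comp (f := fun t : ℝ => ((Y t, t) : ℝ × ℝ))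
      (g := fun p : ℝ × ℝ => P S p.1 p.2) ((contOn_P S) _ hp₀) h1 (fun t ht => ?_)
    exact mem_U (lt_of_lt_of_le one_pos ht.1)
  have hYcont : ContinuousWithinAt Y (Icc 1 T) τ := hYc τ hτmem
  have hev : ∀ᶠ t in 𝓝[Icc 1 T] τ,
      |Y t - Y τ| ≤ 1/2 ∧ |P S (Y t) t| ≤ 1/2 := by
    have h1 : ∀ᶠ t in 𝓝[Icc 1 T] τ, Y t ∈ Metric.ball (Y τ) (1/2) :=
      hYcont (Metric.ball_mem_nhds _ (by norm_num))
    have h2 : ∀ᶠ t in 𝓝[Icc 1 T] τ, P S (Y t) t ∈ Metric.ball (P S (Y τ) τ) (1/2) :=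
      hPcont (Metric.ball_mem_nhds _ (by norm_num))
    filter_upwards [h1, h2] with t ht1 ht2
    constructor
    · rw [Metric.mem_ball, Real.dist_eq] at ht1
      exact ht1.le
    · rw [Metric.mem_ball, Real.dist_eq, hPτ, sub_zero] at ht2
      exact ht2.le
  -- extract an interval [τ, τ+η]
  obtain ⟨r, hr, hrsub⟩ := Metric.mem_nhdsWithin_iff.1 hev
  set η := min (min (r/2) ((T - τ)/2)) (min ((τ+1) - τ) 1) with hηdef
  have hηpos : 0 < η := by
    refine lt_min (lt_min (by linarith) (by linarith)) (lt_min (by linarith) one_pos)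
  have hητ : ∀ t ∈ Icc τ (τ + η), t ∈ Icc 1 T ∧ t ∈ Metric.ball τ r ∧ t ≤ τ + 1 := by
    intro t ht
    have hη1 : η ≤ r/2 := le_trans (min_le_left _ _) (min_le_left _ _)
    have hη2 : η ≤ (T - τ)/2 := le_trans (min_le_left _ _) (min_le_right _ _)
    have hη4 : η ≤ 1 := le_trans (min_le_right _ _) (min_le_right _ _)
    refine ⟨⟨le_trans hτ1 ht.1, by nlinarith [ht.2]⟩, ?_, by nlinarith [ht.2]⟩
    rw [Metric.mem_ball, Real.dist_eq, abs_of_nonneg (by linarith [ht.1])]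
    nlinarith [ht.2]
  -- the smallness conditions hold on [τ, τ+η]
  have hsmall : ∀ t ∈ Icc τ (τ + η), |Y t - Y τ| ≤ 1/2 ∧ |P S (Y t) t| ≤ 1/2 := by
    intro t ht
    obtain ⟨hmem, hball, _⟩ := hητ t ht
    exact hrsub ⟨hball, hmem⟩
  -- derivative formula and bound for w on [τ, τ + η)
  set Kw := 3 * |S.ε| * KQ + S.C with hKwdef
  have hetaT2 : η ≤ (T - τ)/2 := le_trans (min_le_left _ _) (min_le_right _ _)
  have hderiv : ∀ t ∈ Ico τ (τ + η), HasDerivWithinAt w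
      (S.ε * (P S (Y t) t)^2 + w t * (S.ε * Q S (Y t) t - K S (deriv (deriv S.G)) (Y t) t))
      (Ici t) t := by
    intro t ht
    have htmem : t ∈ Icc τ (τ + η) := ⟨ht.1, ht.2.le⟩
    have ht1T : t ∈ Icc 1 T := (hητ t htmem).1
    have htpos : (0:ℝ) < t := lt_of_lt_of_le one_pos ht1T.1
    have htltT : t < T := by
      have := ht.2
      nlinarith [hηpos]
    have hYt : HasDerivWithinAt Y (vF S t (Y t)) (Ici t) t :=
      sol_deriv_Ici S hY ⟨ht1T.1, htltT⟩
    have hγ : HasDerivWithinAt (fun s : ℝ => ((Y s, s) : ℝ × ℝ))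
        ((vF S t (Y t), 1)) (Ici t) t :=
      hYt.prodMk (hasDerivAt_id t).hasDerivWithinAt
    have hw' : HasDerivWithinAt w
        (fderiv ℝ (F S) (Y t, t) (vF S t (Y t), 1)) (Ici t) t :=
      HasFDerivAt.comp_hasDerivWithinAt (f := fun s : ℝ => ((Y s, s) : ℝ × ℝ)) t
        (F_hasFDerivAt S (mem_U htpos : (Y t, t) ∈ U)) hγ
    have e2 : fderiv ℝ (F S) (Y t, t) (0, 1)
        = P S (Y t) t * (S.ε * P S (Y t) t - K S (deriv S.G) (Y t) t)
          + S.ρ (Y t) t * (S.ε * Q S (Y t) t - K S (deriv (deriv S.G)) (Y t) t) :=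
      (hasDerivAt_timeslice S htpos).unique (pde_unfold S (Y t) htpos)
    have hdecomp : fderiv ℝ (F S) (Y t, t) (vF S t (Y t), 1)
        = vF S t (Y t) * fderiv ℝ (F S) (Y t, t) (1, 0)
          + fderiv ℝ (F S) (Y t, t) (0, 1) := by
      have hsum : ((vF S t (Y t), 1) : ℝ × ℝ)
          = vF S t (Y t) • ((1, 0) : ℝ × ℝ) + ((0, 1) : ℝ × ℝ) := by
        simp [Prod.ext_iff]
      rw [hsum, ContinuousLinearMap.map_add, ContinuousLinearMap.map_smul, smul_eq_mul]
    have hval : fderiv ℝ (F S) (Y t, t) (vF S t (Y t), 1)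
        = S.ε * (P S (Y t) t)^2
          + w t * (S.ε * Q S (Y t) t - K S (deriv (deriv S.G)) (Y t) t) := by
      rw [hdecomp, e2, vF_eq S ht1T.1]
      show K S (deriv S.G) (Y t) t * P S (Y t) t + _ = _
      simp only [hwdef]
      ring
    rw [hval] at hw'
    exact hw'
  have hbound : ∀ t ∈ Ico τ (τ + η),
      ‖S.ε * (P S (Y t) t)^2 + w t * (S.ε * Q S (Y t) t - K S (deriv (deriv S.G)) (Y t) t)‖
      ≤ Kw * ‖w t‖ + 0 := by
    intro t ht
    have htmem : t ∈ Icc τ (τ + η) := ⟨ht.1, ht.2.le⟩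
    have ht1T : t ∈ Icc 1 T := (hητ t htmem).1
    have htpos : (0:ℝ) < t := lt_of_lt_of_le one_pos ht1T.1
    have hηle1 : η ≤ 1 := le_trans (min_le_right _ _) (min_le_right _ _)
    have hYwin : |Y t - Y τ| ≤ 1/2 := (hsmall t htmem).1
    have hPwin : |P S (Y t) t| ≤ 1/2 := (hsmall t htmem).2
    have hbox_mem : ∀ y ∈ Icc (Y t - 1/2) (Y t + 1/2),
        ((y, t) : ℝ × ℝ) ∈ (Icc (Y τ - 1) (Y τ + 1)) ×ˢ (Icc (τ/2) (τ + 1)) := by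
      intro y hy
      have h1 := neg_le_of_abs_le hYwin
      have h2 := le_of_abs_le hYwin
      refine ⟨⟨by linarith [hy.1], by linarith [hy.2]⟩, ⟨by linarith [ht.1, hτ1], ?_⟩⟩
      have := ht.2
      linarith
    -- Taylor estimate
    have hT2 : (P S (Y t) t)^2 ≤ 2 * KQ * S.ρ (Y t) t := by
      refine taylor_sq (f := fun y => S.ρ y t) (f' := fun y => P S y t)
        (f'' := fun y => Q S y t) (x := Y t) (δ := 1/2) (K := KQ)
        (by norm_num) hKQpos
        (fun y _ => hasDerivAt_slice S htpos)
        (fun y _ => hasDerivAt_P S htpos)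
        (fun y hy => ?_) (fun y _ => S.hρpos y t) ?_
      · have := hMQ (y, t) (hbox_mem y hy)
        rw [Real.norm_eq_abs] at this
        simp only [hKQdef]
        linarith
      · calc |P S (Y t) t| ≤ 1/2 := hPwin
          _ ≤ KQ * (1/2) := by linarith
    have hQbd : |Q S (Y t) t| ≤ KQ := by
      have := hMQ (Y t, t) (hbox_mem (Y t) ⟨by linarith, by linarith⟩)
      rw [Real.norm_eq_abs] at this
      simp only [hKQdef]
      linarith
    have hK2bd : |K S (deriv (deriv S.G)) (Y t) t| ≤ S.C := abs_K2_le S htpos _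
    have hwnn : 0 ≤ w t := S.hρpos (Y t) t
    rw [Real.norm_eq_abs, Real.norm_eq_abs, abs_of_nonneg hwnn]
    have h1 : |S.ε * (P S (Y t) t)^2 + w t * (S.ε * Q S (Y t) t
        - K S (deriv (deriv S.G)) (Y t) t)|
        ≤ |S.ε| * (P S (Y t) t)^2 + w t * (|S.ε| * KQ + S.C) := by
      calc |S.ε * (P S (Y t) t)^2 + w t * (S.ε * Q S (Y t) t
            - K S (deriv (deriv S.G)) (Y t) t)|
          ≤ |S.ε * (P S (Y t) t)^2| + |w t * (S.ε * Q S (Y t) t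
            - K S (deriv (deriv S.G)) (Y t) t)| := abs_add_le _ _
        _ ≤ |S.ε| * (P S (Y t) t)^2 + w t * (|S.ε| * KQ + S.C) := by
            rw [abs_mul, abs_mul, abs_of_nonneg (sq_nonneg (P S (Y t) t)),
              abs_of_nonneg hwnn]
            refine add_le_add (le_refl _) (mul_le_mul_of_nonneg_left ?_ hwnn)
            calc |S.ε * Q S (Y t) t - K S (deriv (deriv S.G)) (Y t) t|
                ≤ |S.ε * Q S (Y t) t| + |K S (deriv (deriv S.G)) (Y t) t| := abs_sub _ _
              _ ≤ |S.ε| * KQ + S.C := by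
                  rw [abs_mul]
                  exact add_le_add (mul_le_mul_of_nonneg_left hQbd (abs_nonneg _)) hK2bd
    have h2 : |S.ε| * (P S (Y t) t)^2 ≤ |S.ε| * (2 * KQ * w t) :=
      mul_le_mul_of_nonneg_left hT2 (abs_nonneg _)
    simp only [hKwdef]
    nlinarith [h1, h2]
  -- Grönwall
  have hgron := norm_le_gronwallBound_of_norm_deriv_right_le
    (f := w) (δ := 0) (K := Kw) (ε := 0) (a := τ) (b := τ + η)
    (hwc.mono (fun u hu => ⟨le_trans hτ1 hu.1, (hητ u hu).1.2⟩)) hderiv (by simp [hwτ]) hbound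
  have hwzero : ∀ t ∈ Icc τ (τ + η), w t = 0 := by
    intro t ht
    have := hgron t ht
    rw [gronwallBound_ε0] at this
    simp only [zero_mul] at this
    have h2 := norm_nonneg (w t)
    have : ‖w t‖ ≤ 0 := by simpa using this
    simpa [norm_eq_zero] using le_antisymm this h2
  -- contradiction with the maximality of τ
  have hτη : τ + η ∈ Z := by
    refine ⟨⟨by linarith, (hητ (τ+η) ⟨by linarith, le_refl _⟩).1.2⟩, fun s hs => ?_⟩
    rcases le_total s τ with h | h
    · exact hτZ.2 s ⟨hs.1, h⟩
    · exact hwzero s ⟨h, hs.2⟩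
  have := le_csSup hZbdd hτη
  linarith


/-! ### Global edge trajectories -/

lemma exists_edge (x₀ : ℝ) : ∃ X : ℝ → ℝ, X 1 = x₀ ∧
    (∀ T, 1 ≤ T → ∀ t ∈ Icc 1 T, HasDerivWithinAt X (vF S t (X t)) (Icc 1 T) t) ∧
    ContinuousOn X (Ici 1) ∧
    (∀ t, 1 < t → HasDerivAt X (K S (deriv S.G) (X t) t) t) := by
  -- per-horizon solutions
  have hsol : ∀ T : ℝ, ∃ X : ℝ → ℝ, 1 ≤ T → (X 1 = x₀ ∧
      ∀ t ∈ Icc 1 T, HasDerivWithinAt X (vF S t (X t)) (Icc 1 T) t) := by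
    intro T
    rcases le_or_gt 1 T with hT | hT
    · obtain ⟨X, hX1, hXd⟩ := exists_traj S (t₀ := 1) hT ⟨le_refl _, hT⟩ x₀
      exact ⟨X, fun _ => ⟨hX1, hXd⟩⟩
    · exact ⟨fun _ => x₀, fun h => absurd h (not_le.2 hT)⟩
  choose Xf hXf using hsol
  -- agreement of any two horizons on the common interval
  have hagree : ∀ T T' : ℝ, 1 ≤ T → 1 ≤ T' → T ≤ T' →
      EqOn (Xf T) (Xf T') (Icc 1 T) := by
    intro T T' hT hT' hTT'
    refine traj_unique S hT (fun t ht => (hXf T hT).2 t ht)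
      (fun t ht => ((hXf T' hT').2 t ⟨ht.1, le_trans ht.2 hTT'⟩).mono
        (Icc_subset_Icc_right hTT'))
      (s := 1) ⟨le_refl _, hT⟩ (by rw [(hXf T hT).1, (hXf T' hT').1])
  set X : ℝ → ℝ := fun t => Xf (max (t + 1) 1) t with hXdef
  -- X agrees with Xf T on Icc 1 T
  have hXeq : ∀ T, 1 ≤ T → EqOn X (Xf (T + 1)) (Icc 1 T) := by
    intro T hT s hs
    have hs1 : (1:ℝ) ≤ s + 1 := by linarith [hs.1]
    have hmax : max (s + 1) 1 = s + 1 := max_eq_left hs1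
    have hT1 : (1:ℝ) ≤ T + 1 := by linarith
    have h1 : Xf (max (s + 1) 1) s = Xf (s+1) s := by rw [hmax]
    have h2 : Xf (s+1) s = Xf (T+1) s :=
      hagree (s+1) (T+1) hs1 hT1 (by linarith [hs.2]) ⟨hs.1, by linarith⟩
    simp only [hXdef]
    rw [h1, h2]
  have hX1 : X 1 = x₀ := by
    have h := hXeq 1 (le_refl _) (left_mem_Icc.2 (le_refl 1))
    rw [h]
    have h2 : (1:ℝ) + 1 = 2 := by norm_num
    rw [h2]
    exact (hXf 2 (by norm_num)).1
  have hXsol : ∀ T, 1 ≤ T → ∀ t ∈ Icc 1 T,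
      HasDerivWithinAt X (vF S t (X t)) (Icc 1 T) t := by
    intro T hT t ht
    have hT1 : (1:ℝ) ≤ T + 1 := by linarith
    have hd := ((hXf (T+1) hT1).2 t ⟨ht.1, by linarith [ht.2]⟩).mono
      (Icc_subset_Icc_right (by linarith : T ≤ T + 1))
    have h := hd.congr (fun s hs => (hXeq T hT hs)) (hXeq T hT ht)
    rwa [← hXeq T hT ht] at h
  have hXcont : ContinuousOn X (Ici 1) := by
    intro t ht
    have h1 : t ∈ Icc 1 (t+1) := ⟨ht, by linarith⟩
    have hc : ContinuousWithinAt X (Icc 1 (t+1)) t :=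
      (hXsol (t+1) (by linarith [mem_Ici.1 ht]) t h1).continuousWithinAt
    refine hc.mono_of_mem_nhdsWithin ?_
    have h2 : Ici 1 ∩ Iio (t+1) ∈ 𝓝[Ici 1] t :=
      inter_mem_nhdsWithin _ (Iio_mem_nhds (by linarith))
    exact mem_of_superset h2 (fun u hu => ⟨hu.1, hu.2.le⟩)
  have hXderiv : ∀ t, 1 < t → HasDerivAt X (K S (deriv S.G) (X t) t) t := by
    intro t ht
    have h1 : t ∈ Icc 1 (t+1) := ⟨ht.le, by linarith⟩
    have hd := hXsol (t+1) (by linarith) t h1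
    rw [vF_eq S ht.le] at hd
    exact hd.hasDerivAt (Icc_mem_nhds ht (by linarith))
  exact ⟨X, hX1, hXsol, hXcont, hXderiv⟩

/-! ### Confinement -/

/-- everything at or to the right of the right edge trajectory vanishes. -/
lemma right_confine {b₁ : ℝ} (hb₁ : ∀ y, b₁ ≤ y → S.ρ y 1 = 0)
    {X : ℝ → ℝ} (hX1 : X 1 = b₁)
    (hX : ∀ T, 1 ≤ T → ∀ t ∈ Icc 1 T, HasDerivWithinAt X (vF S t (X t)) (Icc 1 T) t) :
    ∀ t, 1 ≤ t → ∀ z, X t ≤ z → S.ρ z t = 0 := by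
  intro t ht z hz
  obtain ⟨W, hW1, hWd⟩ := exists_traj S (T := t) (t₀ := t) ht ⟨ht, le_refl _⟩ z
  have hWb : b₁ ≤ W 1 := by
    by_contra hcon
    push_neg at hcon
    have hWc : ContinuousOn (fun s => W s - X s) (Icc 1 t) := by
      refine ContinuousOn.sub (fun s hs => (hWd s hs).continuousWithinAt)
        (fun s hs => (hX t ht s hs).continuousWithinAt)
    have hivt := intermediate_value_Icc ht hWc
    have h0mem : (0:ℝ) ∈ Icc (W 1 - X 1) (W t - X t) := by
      constructor
      · rw [hX1]; linarith
      · rw [hW1]; linarith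
    obtain ⟨s, hs, hseq⟩ := hivt h0mem
    have hWX : W s = X s := by linarith [sub_eq_zero.1 hseq]
    have := traj_unique S ht hWd (hX t ht) hs hWX
    have h1 := this (left_mem_Icc.2 ht)
    rw [hX1] at h1
    linarith
  have hρW1 : S.ρ (W 1) 1 = 0 := hb₁ _ hWb
  have := invariance S ht hWd hρW1 t ⟨ht, le_refl _⟩
  rwa [hW1] at this

/-- everything at or to the left of the left edge trajectory vanishes. -/
lemma left_confine {a₁ : ℝ} (ha₁ : ∀ y, y ≤ a₁ → S.ρ y 1 = 0)
    {X : ℝ → ℝ} (hX1 : X 1 = a₁)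
    (hX : ∀ T, 1 ≤ T → ∀ t ∈ Icc 1 T, HasDerivWithinAt X (vF S t (X t)) (Icc 1 T) t) :
    ∀ t, 1 ≤ t → ∀ z, z ≤ X t → S.ρ z t = 0 := by
  intro t ht z hz
  obtain ⟨W, hW1, hWd⟩ := exists_traj S (T := t) (t₀ := t) ht ⟨ht, le_refl _⟩ z
  have hWb : W 1 ≤ a₁ := by
    by_contra hcon
    push_neg at hcon
    have hWc : ContinuousOn (fun s => W s - X s) (Icc 1 t) := by
      refine ContinuousOn.sub (fun s hs => (hWd s hs).continuousWithinAt)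
        (fun s hs => (hX t ht s hs).continuousWithinAt)
    have hivt := intermediate_value_Icc' ht hWc
    have h0mem : (0:ℝ) ∈ Icc (W t - X t) (W 1 - X 1) := by
      constructor
      · rw [hW1]; linarith
      · rw [hX1]; linarith
    obtain ⟨s, hs, hseq⟩ := hivt h0mem
    have hWX : W s = X s := by linarith [sub_eq_zero.1 hseq]
    have := traj_unique S ht hWd (hX t ht) hs hWX
    have h1 := this (left_mem_Icc.2 ht)
    rw [hX1] at h1
    linarith
  have hρW1 : S.ρ (W 1) 1 = 0 := ha₁ _ hWb
  have := invariance S ht hWd hρW1 t ⟨ht, le_refl _⟩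
  rwa [hW1] at this


/-! ### Edge dynamics and the endgame -/

lemma K1_nonpos_right {b t : ℝ} (ht : 0 < t) (hconf : ∀ z, b ≤ z → S.ρ z t = 0) :
    K S (deriv S.G) b t ≤ 0 := by
  refine integral_nonpos (fun w => ?_)
  rcases le_or_gt w b with h | h
  · exact mul_nonpos_of_nonpos_of_nonneg (G'nonpos S (by linarith)) (S.hρpos w t)
  · rw [hconf w h.le]
    simp

lemma K1_nonneg_left {a t : ℝ} (ht : 0 < t) (hconf : ∀ z, z ≤ a → S.ρ z t = 0) :
    0 ≤ K S (deriv S.G) a t := by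
  refine integral_nonneg (fun w => ?_)
  rcases le_or_gt w a with h | h
  · rw [hconf w h]
    simp
  · show 0 ≤ deriv S.G (a - w) * S.ρ w t
    have h1 : deriv S.G (a - w) = - deriv S.G (w - a) := by
      rw [show a - w = -(w - a) by ring, G'odd]
    have h2 : deriv S.G (w - a) ≤ 0 := G'nonpos S (by linarith)
    have h3 := S.hρpos w t
    rw [h1]
    nlinarith

lemma edge_antitone {B : ℝ → ℝ} (hcont : ContinuousOn B (Ici 1))
    (hder : ∀ t, 1 < t → HasDerivAt B (K S (deriv S.G) (B t) t) t)
    (hsign : ∀ t, 1 < t → K S (deriv S.G) (B t) t ≤ 0) : AntitoneOn B (Ici 1) := by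
  refine antitoneOn_of_deriv_nonpos (convex_Ici 1) hcont ?_ ?_
  · intro t ht
    rw [interior_Ici] at ht
    exact (hder t ht).differentiableAt.differentiableWithinAt
  · intro t ht
    rw [interior_Ici] at ht
    rw [(hder t ht).deriv]
    exact hsign t ht

lemma edge_monotone {A : ℝ → ℝ} (hcont : ContinuousOn A (Ici 1))
    (hder : ∀ t, 1 < t → HasDerivAt A (K S (deriv S.G) (A t) t) t)
    (hsign : ∀ t, 1 < t → 0 ≤ K S (deriv S.G) (A t) t) : MonotoneOn A (Ici 1) := by
  refine monotoneOn_of_deriv_nonneg (convex_Ici 1) hcont ?_ ?_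
  · intro t ht
    rw [interior_Ici] at ht
    exact (hder t ht).differentiableAt.differentiableWithinAt
  · intro t ht
    rw [interior_Ici] at ht
    rw [(hder t ht).deriv]
    exact hsign t ht

lemma edges_ordered {t a b : ℝ} (ht : 0 < t)
    (hconfB : ∀ z, b ≤ z → S.ρ z t = 0) (hconfA : ∀ z, z ≤ a → S.ρ z t = 0) :
    a ≤ b := by
  by_contra hcon
  push_neg at hcon
  have hz : (fun w => S.ρ w t) = fun _ => 0 := by
    funext w
    rcases le_or_gt w a with h | h
    · exact hconfA w h
    · rcases le_or_gt b w with h2 | h2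
      · exact hconfB w h2
      · linarith
  have := slice_mass S ht
  rw [hz] at this
  simp at this

/-- The key quantitative decay of the distance between the edges. -/
lemma key_decay {t a b c ℓ L₀ : ℝ} (ht : 0 < t)
    (hconfB : ∀ z, b ≤ z → S.ρ z t = 0) (hconfA : ∀ z, z ≤ a → S.ρ z t = 0)
    (hℓ : 0 < ℓ) (hlb : ℓ ≤ b - a) (hub : b - a ≤ L₀)
    (hc : ∀ s ∈ Icc (ℓ/2) L₀, c ≤ -deriv S.G s) :
    K S (deriv S.G) b t - K S (deriv S.G) a t ≤ -c := by
  have hint1 : Integrable (fun w => deriv S.G (b - w) * S.ρ w t) :=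
    K_integrand_integrable S (G'cont S) S.hG'bd ht b
  have hint2 : Integrable (fun w => deriv S.G (a - w) * S.ρ w t) :=
    K_integrand_integrable S (G'cont S) S.hG'bd ht a
  have hsub : K S (deriv S.G) b t - K S (deriv S.G) a t
      = ∫ w, (deriv S.G (b - w) * S.ρ w t - deriv S.G (a - w) * S.ρ w t) :=
    (integral_sub hint1 hint2).symm
  rw [hsub]
  have hpt : ∀ w, deriv S.G (b - w) * S.ρ w t - deriv S.G (a - w) * S.ρ w t
      ≤ -c * S.ρ w t := by
    intro w
    by_cases hρw : S.ρ w t = 0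
    · rw [hρw]; simp
    · have hwb : w < b := by
        by_contra h
        push_neg at h
        exact hρw (hconfB w h)
      have hwa : a < w := by
        by_contra h
        push_neg at h
        exact hρw (hconfA w h)
      have hodd : deriv S.G (a - w) = - deriv S.G (w - a) := by
        rw [show a - w = -(w - a) by ring, G'odd]
      have hρnn := S.hρpos w t
      have hd12 : (b - w) + (w - a) = b - a := by ring
      have hmain : deriv S.G (b - w) - deriv S.G (a - w) ≤ -c := by
        rcases le_total (b - w) (w - a) with hcase | hcase
        · -- w - a ≥ (b-a)/2
          have hmem : w - a ∈ Icc (ℓ/2) L₀ := by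
            constructor <;> nlinarith
          have h1 := hc _ hmem
          have h2 : deriv S.G (b - w) ≤ 0 := G'nonpos S (by linarith)
          rw [hodd]
          linarith
        · have hmem : b - w ∈ Icc (ℓ/2) L₀ := by
            constructor <;> nlinarith
          have h1 := hc _ hmem
          have h2 : deriv S.G (w - a) ≤ 0 := G'nonpos S (by linarith)
          rw [hodd]
          linarith
      calc deriv S.G (b - w) * S.ρ w t - deriv S.G (a - w) * S.ρ w t
          = (deriv S.G (b - w) - deriv S.G (a - w)) * S.ρ w t := by ring
        _ ≤ -c * S.ρ w t := mul_le_mul_of_nonneg_right hmain hρnn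
  calc ∫ w, (deriv S.G (b - w) * S.ρ w t - deriv S.G (a - w) * S.ρ w t)
      ≤ ∫ w, -c * S.ρ w t := by
        refine integral_mono (hint1.sub hint2) ((slice_integrable S ht).const_mul _) hpt
    _ = -c * ∫ w, S.ρ w t := integral_const_mul _ _
    _ = -c := by rw [slice_mass S ht, mul_one]

/-- **Main convergence**: there is a point `xlim` such that away from it the
density vanishes for all large times. -/
theorem main_conv : ∃ xlim : ℝ, ∀ x, x ≠ xlim → Tendsto (fun t => S.ρ x t) atTop (𝓝 0) := by
  -- initial support bound
  obtain ⟨R, hR⟩ : ∃ R : ℝ, tsupport (fun w => S.ρ w 1) ⊆ Icc (-R) R := by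
    obtain ⟨R, hR⟩ := (S.hρsupp 1 one_pos.le).isCompact.isBounded.subset_closedBall 0
    refine ⟨R, fun w hw => ?_⟩
    have := hR hw
    simp only [Metric.mem_closedBall, Real.dist_eq, sub_zero] at this
    exact ⟨neg_le_of_abs_le this, le_of_abs_le this⟩
  have hb₁ : ∀ y, R + 1 ≤ y → S.ρ y 1 = 0 := by
    intro y hy
    refine image_eq_zero_of_notMem_tsupport (f := fun w => S.ρ w 1) (fun hc => ?_)
    have := hR hc
    have := this.2
    linarith
  have ha₁ : ∀ y, y ≤ -(R + 1) → S.ρ y 1 = 0 := by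
    intro y hy
    refine image_eq_zero_of_notMem_tsupport (f := fun w => S.ρ w 1) (fun hc => ?_)
    have := (hR hc).1
    linarith
  obtain ⟨B, hB1, hBsol, hBcont, hBder⟩ := exists_edge S (R + 1)
  obtain ⟨A, hA1, hAsol, hAcont, hAder⟩ := exists_edge S (-(R + 1))
  have hBz : ∀ t, 1 ≤ t → ∀ z, B t ≤ z → S.ρ z t = 0 := right_confine S hb₁ hB1 hBsol
  have hAz : ∀ t, 1 ≤ t → ∀ z, z ≤ A t → S.ρ z t = 0 := left_confine S ha₁ hA1 hAsol
  have horder : ∀ t, 1 ≤ t → A t ≤ B t := fun t ht =>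
    edges_ordered S (lt_of_lt_of_le one_pos ht) (hBz t ht) (hAz t ht)
  have hBanti : AntitoneOn B (Ici 1) :=
    edge_antitone S hBcont hBder (fun t ht =>
      K1_nonpos_right S (lt_trans one_pos ht) (hBz t ht.le))
  have hAmono : MonotoneOn A (Ici 1) :=
    edge_monotone S hAcont hAder (fun t ht =>
      K1_nonneg_left S (lt_trans one_pos ht) (hAz t ht.le))
  -- extremal values
  have hBimne : (B '' Ici 1).Nonempty := ⟨B 1, 1, self_mem_Ici, rfl⟩
  have hAimne : (A '' Ici 1).Nonempty := ⟨A 1, 1, self_mem_Ici, rfl⟩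
  have hABst : ∀ s ∈ Ici (1:ℝ), ∀ u ∈ Ici (1:ℝ), A s ≤ B u := by
    intro s hs u hu
    have h1 : A s ≤ A (max s u) := hAmono hs (mem_Ici.2 (le_trans hs (le_max_left _ _))) (le_max_left _ _)
    have h2 : B (max s u) ≤ B u := hBanti hu (mem_Ici.2 (le_trans hu (le_max_right _ _))) (le_max_right _ _)
    have h3 := horder (max s u) (le_trans hs (le_max_left _ _))
    linarith
  have hBbdd : BddBelow (B '' Ici 1) := ⟨A 1, fun y ⟨u, hu, huy⟩ => by
    rw [← huy]; exact hABst 1 self_mem_Ici u hu⟩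
  have hAbdd : BddAbove (A '' Ici 1) := ⟨B 1, fun y ⟨s, hs, hsy⟩ => by
    rw [← hsy]; exact hABst s hs 1 self_mem_Ici⟩
  set Binf := sInf (B '' Ici 1) with hBinf
  set Asup := sSup (A '' Ici 1) with hAsup
  have hABle : Asup ≤ Binf := by
    refine csSup_le hAimne (fun y ⟨s, hs, hsy⟩ => ?_)
    refine le_csInf hBimne (fun z ⟨u, hu, huz⟩ => ?_)
    rw [← hsy, ← huz]
    exact hABst s hs u hu
  -- the gap must close
  have hgap : Binf ≤ Asup := by
    by_contra hcon
    push_neg at hcon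
    set ℓ := Binf - Asup with hℓdef
    have hℓpos : 0 < ℓ := by simp only [hℓdef]; linarith
    set L₀ := B 1 - A 1 with hL₀def
    have hLlb : ∀ t, 1 ≤ t → ℓ ≤ B t - A t := by
      intro t ht
      have h1 : Binf ≤ B t := csInf_le hBbdd ⟨t, ht, rfl⟩
      have h2 : A t ≤ Asup := le_csSup hAbdd ⟨t, ht, rfl⟩
      simp only [hℓdef]
      linarith
    have hLub : ∀ t, 1 ≤ t → B t - A t ≤ L₀ := by
      intro t ht
      have h1 : B t ≤ B 1 := hBanti self_mem_Ici ht ht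
      have h2 : A 1 ≤ A t := hAmono self_mem_Ici ht ht
      simp only [hL₀def]
      linarith
    have hℓL₀ : ℓ ≤ L₀ := le_trans (hLlb 1 le_rfl) (hLub 1 le_rfl)
    -- the minimum of -G' on the relevant compact interval
    have hIcc_ne : (Icc (ℓ/2) L₀).Nonempty := ⟨ℓ/2, le_refl _, by linarith⟩
    obtain ⟨s₀, hs₀mem, hs₀min⟩ := isCompact_Icc.exists_isMinOn hIcc_ne
      (((G'cont S).neg).continuousOn)
    set c := -deriv S.G s₀ with hcdef
    have hcpos : 0 < c := by
      simp only [hcdef]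
      have : 0 < s₀ := lt_of_lt_of_le (by linarith) hs₀mem.1
      linarith [S.hG'neg s₀ this]
    have hc : ∀ s ∈ Icc (ℓ/2) L₀, c ≤ -deriv S.G s := fun s hs => hs₀min hs
    -- derivative bound for g t = (B t - A t) + c t
    have hgder : ∀ t, 1 < t → HasDerivAt (fun t => (B t - A t) + c * t)
        ((K S (deriv S.G) (B t) t - K S (deriv S.G) (A t) t) + c) t := by
      intro t ht
      exact ((hBder t ht).sub (hAder t ht)).add
        (by simpa using (hasDerivAt_id t).const_mul c)
    have hganti : AntitoneOn (fun t => (B t - A t) + c * t) (Ici 1) := by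
      refine antitoneOn_of_deriv_nonpos (convex_Ici 1)
        ((hBcont.sub hAcont).add (continuous_const.mul continuous_id).continuousOn) ?_ ?_
      · intro t ht
        rw [interior_Ici] at ht
        exact (hgder t ht).differentiableAt.differentiableWithinAt
      · intro t ht
        rw [interior_Ici] at ht
        rw [(hgder t ht).deriv]
        have hkey := key_decay S (lt_trans one_pos ht) (hBz t ht.le) (hAz t ht.le)
          hℓpos (hLlb t ht.le) (hLub t ht.le) hc
        linarith
    -- contradiction for large t
    set tbig := max 1 ((L₀ + c)/c + 1) with htbig
    have htbig1 : (1:ℝ) ≤ tbig := le_max_left _ _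
    have htbigval : L₀ + c ≤ c * tbig - c := by
      have h1 : (L₀ + c)/c + 1 ≤ tbig := le_max_right _ _
      have h2 : c * ((L₀ + c)/c + 1) ≤ c * tbig := mul_le_mul_of_nonneg_left h1 hcpos.le
      rw [mul_add, mul_div_cancel₀ _ (ne_of_gt hcpos)] at h2
      linarith
    have := hganti self_mem_Ici htbig1 htbig1
    have hlb := hLlb tbig htbig1
    simp only at this
    nlinarith
  have hxinfty : Binf = Asup := le_antisymm hgap hABle
  refine ⟨Binf, fun x hx => ?_⟩
  rcases lt_or_gt_of_ne hx with hlt | hgt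
  · -- x < xlim = Asup : eventually below the left edge
    rw [hxinfty] at hlt
    obtain ⟨y, ⟨s, hs, hsy⟩, hy⟩ := exists_lt_of_lt_csSup hAimne hlt
    have hev : ∀ᶠ t in atTop, S.ρ x t = 0 := by
      filter_upwards [eventually_ge_atTop s] with t hts
      have hst : s ≤ t := hts
      have h1 : A s ≤ A t := hAmono hs (le_trans hs hst) hst
      refine hAz t (le_trans hs hst) x ?_
      rw [← hsy] at hy
      linarith
    exact Tendsto.congr' (hev.mono (fun t ht => ht.symm)) tendsto_const_nhds
  · -- x > xlim = Binf : eventually above the right edge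
    obtain ⟨y, ⟨s, hs, hsy⟩, hy⟩ := exists_lt_of_csInf_lt hBimne hgt
    have hev : ∀ᶠ t in atTop, S.ρ x t = 0 := by
      filter_upwards [eventually_ge_atTop s] with t hts
      have hst : s ≤ t := hts
      have h1 : B t ≤ B s := hBanti hs (le_trans hs hst) hst
      refine hBz t (le_trans hs hst) x ?_
      rw [← hsy] at hy
      linarith
    exact Tendsto.congr' (hev.mono (fun t ht => ht.symm)) tendsto_const_nhds

end
end AD

/-- **Large time decay in the diffusion-dominated regime** (Theorem 3.1 of the
paper).  If `ε ≥ ‖G‖_{L¹}` then every (classical, compactly supported,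
probability-density-valued) solution of
`∂ₜρ = ∂ₓ(ρ ∂ₓ(ερ − G⋆ρ))` with square-integrable initial datum decays
to zero almost everywhere as `t → ∞`. -/
theorem stmt2
    (G : ℝ → ℝ) (hGpos : ∀ x, 0 ≤ G x) (hGeven : ∀ x, G (-x) = G x)
    (hGint : Integrable G) (hGsmooth : ContDiff ℝ 2 G)
    (C : ℝ) (hGbd : ∀ x, |G x| ≤ C) (hG'bd : ∀ x, |deriv G x| ≤ C)
    (hG''bd : ∀ x, |deriv (deriv G) x| ≤ C)
    (hG'neg : ∀ x > (0:ℝ), deriv G x < 0)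
    (ε : ℝ) (hε : (∫ z, G z) ≤ ε)
    (ρ : ℝ → ℝ → ℝ) (hρpos : ∀ x t, 0 ≤ ρ x t)
    (hρsmooth : ContDiffOn ℝ 2 (Function.uncurry ρ) (univ ×ˢ Ici 0))
    (hρprob : ∀ t ≥ (0:ℝ), ∫ x, ρ x t = 1)
    (hρsupp : ∀ t ≥ (0:ℝ), HasCompactSupport (fun x => ρ x t))
    (hρ0L2 : MemLp (fun x => ρ x 0) 2 volume)
    (hPDE : ∀ x : ℝ, ∀ t ≥ (0:ℝ),
      HasDerivAt (fun s => ρ x s)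
        (deriv (fun y => ρ y t *
          deriv (fun y' => ε * ρ y' t - ∫ w, G (y' - w) * ρ w t) y) x) t) :
    ∀ᵐ x : ℝ, Tendsto (fun t => ρ x t) atTop (𝓝 0) := by
  obtain ⟨xlim, h⟩ := AD.main_conv ⟨G, ε, C, ρ, hGeven, hGbd, hGsmooth, hG'bd, hG''bd,
    hG'neg, hρpos, hρsmooth, hρprob, hρsupp, hPDE⟩
  rw [ae_iff]
  refine measure_mono_null (fun x hx => ?_) (measure_singleton xlim)
  simp only [mem_setOf_eq] at hx
  have hxne : x = xlim := by
    by_contra hxne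
    exact hx (h x hxne)
  simpa using hxne
end

section
/- Let k ≥ 1 be an integer and let f, g : [0,1] → ℝ be continuous, C² on (0,1), with f'(z) > 0 and g'(z) > 0 for z ∈ (0,1), and suppose z ↦ (f'(z))^{−2} and z ↦ (g'(z))^{−2} extend to C¹ functions on [0,1] that vanish at z = 0 and z = 1. Then, provided the integrals are finite, −∫₀¹ (f(z) − g(z))^{2k−1} · (d/dz)[(f'(z))^{−2} − (g'(z))^{−2}] dz = (2k−1) ∫₀¹ (f(z) − g(z))^{2k−2} (f'(z) − g'(z)) [(f'(z))^{−2} − (g'(z))^{−2}] dz ≤ 0, since the integrand of the right-hand side is pointwise nonpositive. -/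
open MeasureTheory Real Set Filter Topology intervalIntegral

/-- **Sign of the diffusion term `I₁`** in the evolution of the `L^{2k}([0,1])`
distance between two pseudo-inverse functions: integration by parts (with
vanishing boundary terms) turns the diffusion term into a pointwise
nonpositive integrand. -/
theorem stmt3
    (k : ℕ) (hk : 1 ≤ k)
    (f g : ℝ → ℝ)
    (hfc : ContinuousOn f (Icc 0 1)) (hgc : ContinuousOn g (Icc 0 1))
    (hf2 : ContDiffOn ℝ 2 f (Ioo 0 1)) (hg2 : ContDiffOn ℝ 2 g (Ioo 0 1))
    (hf' : ∀ z ∈ Ioo (0:ℝ) 1, 0 < deriv f z)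
    (hg' : ∀ z ∈ Ioo (0:ℝ) 1, 0 < deriv g z)
    -- `z ↦ (f'(z))⁻²` extends to a `C¹` function on `[0,1]` vanishing at the endpoints
    (F : ℝ → ℝ) (hF : ContDiffOn ℝ 1 F (Icc 0 1))
    (hFeq : ∀ z ∈ Ioo (0:ℝ) 1, F z = ((deriv f z)⁻¹)^2)
    (hF0 : F 0 = 0) (hF1 : F 1 = 0)
    -- `z ↦ (g'(z))⁻²` extends to a `C¹` function on `[0,1]` vanishing at the endpoints
    (Gg : ℝ → ℝ) (hGg : ContDiffOn ℝ 1 Gg (Icc 0 1))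
    (hGgeq : ∀ z ∈ Ioo (0:ℝ) 1, Gg z = ((deriv g z)⁻¹)^2)
    (hGg0 : Gg 0 = 0) (hGg1 : Gg 1 = 0)
    -- the integrals are finite
    (hint1 : IntervalIntegrable (fun z => (f z - g z)^(2*k-1) *
      deriv (fun w => ((deriv f w)⁻¹)^2 - ((deriv g w)⁻¹)^2) z) volume 0 1)
    (hint2 : IntervalIntegrable (fun z => (f z - g z)^(2*k-2) *
      (deriv f z - deriv g z) * (((deriv f z)⁻¹)^2 - ((deriv g z)⁻¹)^2)) volume 0 1) :
    (-∫ z in (0:ℝ)..1, (f z - g z)^(2*k-1) *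
        deriv (fun w => ((deriv f w)⁻¹)^2 - ((deriv g w)⁻¹)^2) z)
      = (2*(k:ℝ)-1) * ∫ z in (0:ℝ)..1, (f z - g z)^(2*k-2) *
          (deriv f z - deriv g z) * (((deriv f z)⁻¹)^2 - ((deriv g z)⁻¹)^2) ∧
    (2*(k:ℝ)-1) * (∫ z in (0:ℝ)..1, (f z - g z)^(2*k-2) *
        (deriv f z - deriv g z) * (((deriv f z)⁻¹)^2 - ((deriv g z)⁻¹)^2)) ≤ 0 := by
  have hkk : (1:ℝ) ≤ (k:ℝ) := by exact_mod_cast hk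
  have hcoef : (0:ℝ) ≤ 2*(k:ℝ)-1 := by linarith
  -- notations
  set v : ℝ → ℝ := fun z => F z - Gg z with hv
  set raw : ℝ → ℝ := fun w => ((deriv f w)⁻¹)^2 - ((deriv g w)⁻¹)^2 with hraw
  have hveq : ∀ z ∈ Ioo (0:ℝ) 1, v z = raw z := fun z hz => by
    simp only [hv, hraw, hFeq z hz, hGgeq z hz]
  have hvderiv : ∀ z ∈ Ioo (0:ℝ) 1, deriv v z = deriv raw z := fun z hz => by
    apply Filter.EventuallyEq.deriv_eq
    filter_upwards [isOpen_Ioo.mem_nhds hz] with w hw using hveq w hw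
  -- v is differentiable at interior points, with `HasDerivAt`
  have hvdiff : ∀ z ∈ Ioo (0:ℝ) 1, HasDerivAt v (deriv v z) z := by
    intro z hz
    have hmem : Icc (0:ℝ) 1 ∈ 𝓝 z :=
      mem_nhds_iff.2 ⟨Ioo 0 1, Ioo_subset_Icc_self, isOpen_Ioo, hz⟩
    have : DifferentiableAt ℝ v z := by
      have hFd : DifferentiableAt ℝ F z :=
        ((hF.differentiableOn one_ne_zero z (Ioo_subset_Icc_self hz)).differentiableAt hmem)
      have hGd : DifferentiableAt ℝ Gg z :=
        ((hGg.differentiableOn one_ne_zero z (Ioo_subset_Icc_self hz)).differentiableAt hmem)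
      exact hFd.sub hGd
    exact this.hasDerivAt
  -- f, g differentiable at interior points
  have hfd : ∀ z ∈ Ioo (0:ℝ) 1, HasDerivAt f (deriv f z) z := by
    intro z hz
    have : DifferentiableAt ℝ f z :=
      (hf2.differentiableOn two_ne_zero z hz).differentiableAt (isOpen_Ioo.mem_nhds hz)
    exact this.hasDerivAt
  have hgd : ∀ z ∈ Ioo (0:ℝ) 1, HasDerivAt g (deriv g z) z := by
    intro z hz
    have : DifferentiableAt ℝ g z :=
      (hg2.differentiableOn two_ne_zero z hz).differentiableAt (isOpen_Ioo.mem_nhds hz)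
    exact this.hasDerivAt
  -- the product H = (f-g)^(2k-1) * v
  set H : ℝ → ℝ := fun z => (f z - g z)^(2*k-1) * v z with hH
  set H' : ℝ → ℝ := fun z => (2*(k:ℝ)-1) * ((f z - g z)^(2*k-2) *
      (deriv f z - deriv g z) * (((deriv f z)⁻¹)^2 - ((deriv g z)⁻¹)^2)) +
      (f z - g z)^(2*k-1) * deriv raw z with hH'
  have hHcont : ContinuousOn H (Icc 0 1) := by
    apply ContinuousOn.mul
    · exact ((hfc.sub hgc).pow _)
    · exact (hF.continuousOn.sub hGg.continuousOn)
  have hHderiv : ∀ x ∈ Ioo (0:ℝ) 1, HasDerivWithinAt H (H' x) (Ioi x) x := by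
    intro x hx
    have h1 : HasDerivAt (fun z => (f z - g z)^(2*k-1))
        ((2*k-1 : ℕ) * (f x - g x)^(2*k-1-1) * (deriv f x - deriv g x)) x :=
      ((hfd x hx).sub (hgd x hx)).pow (2*k-1)
    have h2 : HasDerivAt H
        ((2*k-1 : ℕ) * (f x - g x)^(2*k-1-1) * (deriv f x - deriv g x) * v x
          + (f x - g x)^(2*k-1) * deriv v x) x := h1.mul (hvdiff x hx)
    have heq : ((2*k-1 : ℕ) * (f x - g x)^(2*k-1-1) * (deriv f x - deriv g x) * v x
          + (f x - g x)^(2*k-1) * deriv v x) = H' x := by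
      rw [hveq x hx, hvderiv x hx]
      have e1 : 2*k-1-1 = 2*k-2 := by omega
      have e2 : ((2*k-1 : ℕ) : ℝ) = 2*(k:ℝ)-1 := by
        push_cast [Nat.cast_sub (by omega : 1 ≤ 2*k)]; ring
      rw [e1, e2, hH']
      simp only [hraw]
      ring
    exact (heq ▸ h2).hasDerivWithinAt
  have hH'int : IntervalIntegrable H' volume 0 1 := by
    exact (hint2.const_mul _).add hint1
  have hFTC : ∫ z in (0:ℝ)..1, H' z = H 1 - H 0 :=
    intervalIntegral.integral_eq_sub_of_hasDeriv_right_of_le zero_le_one hHcont hHderiv hH'int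
  have hH0 : H 0 = 0 := by simp [hH, hv, hF0, hGg0]
  have hH1 : H 1 = 0 := by simp [hH, hv, hF1, hGg1]
  have hsplit : ∫ z in (0:ℝ)..1, H' z
      = (2*(k:ℝ)-1) * (∫ z in (0:ℝ)..1, (f z - g z)^(2*k-2) *
          (deriv f z - deriv g z) * (((deriv f z)⁻¹)^2 - ((deriv g z)⁻¹)^2))
        + ∫ z in (0:ℝ)..1, (f z - g z)^(2*k-1) * deriv raw z := by
    rw [intervalIntegral.integral_add (hint2.const_mul _) hint1,
      intervalIntegral.integral_const_mul]
  have hzero : (2*(k:ℝ)-1) * (∫ z in (0:ℝ)..1, (f z - g z)^(2*k-2) *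
          (deriv f z - deriv g z) * (((deriv f z)⁻¹)^2 - ((deriv g z)⁻¹)^2))
        + (∫ z in (0:ℝ)..1, (f z - g z)^(2*k-1) * deriv raw z) = 0 := by
    rw [← hsplit, hFTC, hH0, hH1]; ring
  constructor
  · linarith [hzero]
  · -- sign of the integrand
    have hsign : ∀ x ∈ Ioo (0:ℝ) 1, (f x - g x)^(2*k-2) *
        (deriv f x - deriv g x) * (((deriv f x)⁻¹)^2 - ((deriv g x)⁻¹)^2) ≤ 0 := by
      intro x hx
      set a := deriv f x
      set b := deriv g x
      have ha : 0 < a := hf' x hx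
      have hb : 0 < b := hg' x hx
      have hpow : 0 ≤ (f x - g x)^(2*k-2) :=
        (Even.pow_nonneg ⟨k-1, by omega⟩) _
      have key : (a - b) * ((a⁻¹)^2 - (b⁻¹)^2) ≤ 0 := by
        have e : (a⁻¹)^2 - (b⁻¹)^2 = (b^2 - a^2) / (a^2 * b^2) := by
          field_simp
        rw [e]
        rw [← mul_div_assoc]
        apply div_nonpos_of_nonpos_of_nonneg
        · nlinarith [sq_nonneg (a-b)]
        · positivity
      calc (f x - g x)^(2*k-2) * (a - b) * ((a⁻¹)^2 - (b⁻¹)^2)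
          = (f x - g x)^(2*k-2) * ((a - b) * ((a⁻¹)^2 - (b⁻¹)^2)) := by ring
        _ ≤ 0 := mul_nonpos_of_nonneg_of_nonpos hpow key
    have hInt : (∫ z in (0:ℝ)..1, (f z - g z)^(2*k-2) *
        (deriv f z - deriv g z) * (((deriv f z)⁻¹)^2 - ((deriv g z)⁻¹)^2)) ≤ 0 := by
      have : (0:ℝ) ≤ ∫ z in (0:ℝ)..1, -((f z - g z)^(2*k-2) *
          (deriv f z - deriv g z) * (((deriv f z)⁻¹)^2 - ((deriv g z)⁻¹)^2)) := by
        apply intervalIntegral.integral_nonneg_of_ae_restrict zero_le_one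
        have hnull : ∀ᵐ z ∂(volume.restrict (Icc (0:ℝ) 1)), z ≠ 0 ∧ z ≠ 1 := by
          refine Filter.Eventually.and ?_ ?_ <;>
          · refine ae_restrict_of_ae ?_
            simp only [ae_iff, not_not]
            exact Real.volume_singleton
        filter_upwards [hnull, ae_restrict_mem measurableSet_Icc] with z hz hzIcc
        have hzIoo : z ∈ Ioo (0:ℝ) 1 :=
          ⟨lt_of_le_of_ne hzIcc.1 (Ne.symm hz.1), lt_of_le_of_ne hzIcc.2 hz.2⟩
        simpa using neg_nonneg.mpr (hsign z hzIoo)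
      rw [intervalIntegral.integral_neg] at this
      linarith
    exact mul_nonpos_of_nonneg_of_nonpos hcoef hInt
end

section
/- Let ε ∈ ℝ, R > 0, and let G ∈ C¹(ℝ) be even with G'(x) ≤ 0 for all x ≥ 0. Then ε ∫_ℝ ρ_R(x)² dx + ∫_ℝ∫_ℝ (x−y) G'(x−y) ρ_R(x) ρ_R(y) dx dy ≥ (1/(2R)) ( ε − ∫_{−2R}^{2R} G(z) dz + 4R·G(2R) ). -/
open MeasureTheory Real Set Filter Topology intervalIntegral

/-- **Lower bound for the initial derivative of the second moment for the
uniform density** `ρ_R = (1/(2R)) 𝟙_{[−R,R]}`: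
`ε∫ρ_R² + ∫∫(x−y)G'(x−y)ρ_R(x)ρ_R(y) ≥ (1/(2R))(ε − ∫_{−2R}^{2R}G + 4R·G(2R))`. -/
theorem stmt12
    (ε R : ℝ) (hR : 0 < R)
    (G : ℝ → ℝ) (hG : ContDiff ℝ 1 G)
    (hGeven : ∀ x, G (-x) = G x)
    (hG'neg : ∀ x ≥ (0:ℝ), deriv G x ≤ 0) :
    ε * (∫ x, (Set.indicator (Icc (-R) R) (fun _ => 1/(2*R)) x)^2)
      + (∫ x, ∫ y, (x - y) * deriv G (x - y) *
          Set.indicator (Icc (-R) R) (fun _ => 1/(2*R)) x *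
          Set.indicator (Icc (-R) R) (fun _ => 1/(2*R)) y)
    ≥ (1/(2*R)) * (ε - (∫ z in (-(2*R))..(2*R), G z) + 4*R * G (2*R)) := by
  have hR2 : (0:ℝ) < 2*R := by linarith
  set c : ℝ := 1/(2*R) with hc
  have hc0 : 0 < c := by positivity
  set I : ℝ → ℝ := Set.indicator (Icc (-R) R) (fun _ => c) with hIdef
  have hGd : Differentiable ℝ G := hG.differentiable one_ne_zero
  have hdG : Continuous (deriv G) := hG.continuous_deriv le_rfl
  set f : ℝ → ℝ := fun z => z * deriv G z with hfdef
  have hfc : Continuous f := continuous_id.mul hdG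
  -- G' is odd
  have hG'odd : ∀ x : ℝ, deriv G (-x) = - deriv G x := by
    intro x
    have h1 : HasDerivAt (fun y : ℝ => G (-y)) (deriv G (-x) * (-1)) x :=
      ((hGd (-x)).hasDerivAt).comp x (hasDerivAt_neg x)
    have h2 : (fun y : ℝ => G (-y)) = G := funext hGeven
    rw [h2] at h1
    have := h1.deriv
    linarith [this]
  have hfeven : ∀ z : ℝ, f (-z) = f z := by
    intro z; simp only [hfdef, hG'odd]; ring
  have hfnonpos : ∀ z : ℝ, 0 ≤ z → f z ≤ 0 := fun z hz =>
    mul_nonpos_of_nonneg_of_nonpos hz (hG'neg z hz)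
  set Φ : ℝ → ℝ := fun t => ∫ z in (0:ℝ)..t, f z with hΦdef
  have hΦderiv : ∀ t : ℝ, HasDerivAt Φ (f t) t := by
    intro t
    exact intervalIntegral.integral_hasDerivAt_right (hfc.intervalIntegrable 0 t)
      (hfc.stronglyMeasurableAtFilter _ _) hfc.continuousAt
  have hΦc : Continuous Φ := by
    have : Differentiable ℝ Φ := fun t => (hΦderiv t).differentiableAt
    exact this.continuous
  have hΦodd : ∀ t : ℝ, Φ (-t) = - Φ t := by
    intro t
    have h1 : (∫ z in (0:ℝ)..t, f (-z)) = ∫ z in (-t)..(0:ℝ), f z := by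
      simpa using intervalIntegral.integral_comp_neg (a := (0:ℝ)) (b := t) f
    have h2 : (∫ z in (0:ℝ)..t, f (-z)) = Φ t := by
      simp only [hfeven]; rfl
    have h3 : (∫ z in (-t)..(0:ℝ), f z) = - Φ (-t) := by
      rw [intervalIntegral.integral_symm]
    rw [h2, h3] at h1
    linarith
  -- first integral
  have hind_sq : (∫ x, (I x)^2) = c := by
    have h1 : (fun x => (I x)^2) = Set.indicator (Icc (-R) R) (fun _ => c^2) := by
      funext x
      by_cases hx : x ∈ Icc (-R) R
      · simp [hIdef, Set.indicator_of_mem hx]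
      · simp [hIdef, Set.indicator_of_notMem hx]
    rw [h1, MeasureTheory.integral_indicator measurableSet_Icc]
    rw [MeasureTheory.setIntegral_const]
    simp only [Real.volume_Icc, smul_eq_mul]
    rw [Real.volume_real_Icc_of_le (by linarith)]
    have : R - (-R) = 2*R := by ring
    rw [this, hc]
    field_simp
  -- inner integral computation
  have hinner : ∀ x : ℝ, (∫ y, (x - y) * deriv G (x - y) * I x * I y)
      = I x * ((Φ (x+R) - Φ (x-R)) * c) := by
    intro x
    have h1 : (fun y => (x - y) * deriv G (x - y) * I x * I y)
        = fun y => I x * (Set.indicator (Icc (-R) R) (fun y => (x - y) * deriv G (x - y) * c) y) := by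
      funext y
      by_cases hy : y ∈ Icc (-R) R
      · simp only [hIdef, Set.indicator_of_mem hy]; ring
      · simp [hIdef, Set.indicator_of_notMem hy]
    rw [h1, MeasureTheory.integral_const_mul, MeasureTheory.integral_indicator measurableSet_Icc,
      MeasureTheory.integral_Icc_eq_integral_Ioc,
      ← intervalIntegral.integral_of_le (by linarith : -R ≤ R)]
    congr 1
    have h2 : (∫ y in (-R)..R, (x - y) * deriv G (x - y) * c)
        = (∫ y in (-R)..R, f (x - y)) * c := intervalIntegral.integral_mul_const c _
    rw [h2]
    congr 1
    have h3 : (∫ y in (-R)..R, f (x - y)) = ∫ z in (x - R)..(x - (-R)), f z :=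
      intervalIntegral.integral_comp_sub_left f x
    rw [h3]
    have h4 : x - (-R) = x + R := by ring
    rw [h4]
    rw [← intervalIntegral.integral_interval_sub_left (hfc.intervalIntegrable 0 (x+R))
      (hfc.intervalIntegrable 0 (x-R))]
  -- outer integral
  have hdouble : (∫ x, ∫ y, (x - y) * deriv G (x - y) * I x * I y)
      = 2 * c^2 * (∫ t in (0:ℝ)..(2*R), Φ t) := by
    have h1 : (fun x => ∫ y, (x - y) * deriv G (x - y) * I x * I y)
        = Set.indicator (Icc (-R) R) (fun x => (Φ (x+R) - Φ (x-R)) * c * c) := by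
      funext x
      rw [hinner x]
      by_cases hx : x ∈ Icc (-R) R
      · simp only [hIdef, Set.indicator_of_mem hx]; ring
      · simp [hIdef, Set.indicator_of_notMem hx]
    rw [h1, MeasureTheory.integral_indicator measurableSet_Icc,
      MeasureTheory.integral_Icc_eq_integral_Ioc,
      ← intervalIntegral.integral_of_le (by linarith : -R ≤ R)]
    have h2 : (∫ x in (-R)..R, (Φ (x+R) - Φ (x-R)) * c * c)
        = ((∫ x in (-R)..R, Φ (x+R)) - ∫ x in (-R)..R, Φ (x-R)) * c * c := by
      rw [intervalIntegral.integral_mul_const, intervalIntegral.integral_mul_const]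
      congr 2
      exact intervalIntegral.integral_sub
        ((hΦc.comp (continuous_id.add continuous_const)).intervalIntegrable _ _)
        ((hΦc.comp (continuous_id.sub continuous_const)).intervalIntegrable _ _)
    rw [h2]
    have h3 : (∫ x in (-R)..R, Φ (x+R)) = ∫ t in (0:ℝ)..(2*R), Φ t := by
      rw [intervalIntegral.integral_comp_add_right Φ R]
      norm_num
      ring_nf
    have h4 : (∫ x in (-R)..R, Φ (x-R)) = - ∫ t in (0:ℝ)..(2*R), Φ t := by
      rw [intervalIntegral.integral_comp_sub_right Φ R]
      have e1 : -R - R = -(2*R) := by ring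
      have e2 : R - R = (0:ℝ) := by ring
      rw [e1, e2]
      have h5 : (∫ t in (0:ℝ)..(2*R), Φ (-t)) = ∫ t in (-(2*R))..(0:ℝ), Φ t := by
        simpa using intervalIntegral.integral_comp_neg (a := (0:ℝ)) (b := 2*R) Φ
      have h6 : (∫ t in (0:ℝ)..(2*R), Φ (-t)) = - ∫ t in (0:ℝ)..(2*R), Φ t := by
        simp only [hΦodd]
        rw [intervalIntegral.integral_neg]
      rw [← h5, h6]
    rw [h3, h4]
    ring
  -- even part for G
  have hA : (∫ z in (-(2*R))..(2*R), G z) = 2 * ∫ z in (0:ℝ)..(2*R), G z := by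
    have hsplit : (∫ z in (-(2*R))..(0:ℝ), G z) + (∫ z in (0:ℝ)..(2*R), G z)
        = ∫ z in (-(2*R))..(2*R), G z :=
      intervalIntegral.integral_add_adjacent_intervals
        (hG.continuous.intervalIntegrable _ _) (hG.continuous.intervalIntegrable _ _)
    have h5 : (∫ z in (0:ℝ)..(2*R), G (-z)) = ∫ z in (-(2*R))..(0:ℝ), G z := by
      simpa using intervalIntegral.integral_comp_neg (a := (0:ℝ)) (b := 2*R) G
    have h6 : (∫ z in (0:ℝ)..(2*R), G (-z)) = ∫ z in (0:ℝ)..(2*R), G z := by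
      simp only [hGeven]
    rw [h6] at h5
    linarith
  -- integration by parts: Φ(2R) = 2R G(2R) - ∫₀^{2R} G
  have hIBP : Φ (2*R) = 2*R * G (2*R) - ∫ z in (0:ℝ)..(2*R), G z := by
    have hd : ∀ z ∈ uIcc (0:ℝ) (2*R), HasDerivAt (fun z => z * G z) (G z + f z) z := by
      intro z _
      have : HasDerivAt (fun y => y * G y) (1 * G z + z * deriv G z) z := (hasDerivAt_id' (x := z)).mul ((hGd z).hasDerivAt)
      convert this using 1; simp [hfdef]
    have hint : IntervalIntegrable (fun z => G z + f z) volume 0 (2*R) :=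
      (hG.continuous.add hfc).intervalIntegrable _ _
    have h7 := intervalIntegral.integral_eq_sub_of_hasDerivAt hd hint
    have h8 : (∫ z in (0:ℝ)..(2*R), (G z + f z))
        = (∫ z in (0:ℝ)..(2*R), G z) + Φ (2*R) :=
      intervalIntegral.integral_add (hG.continuous.intervalIntegrable _ _)
        (hfc.intervalIntegrable _ _)
    rw [h8] at h7
    simp at h7
    linarith
  -- the key monotonicity: Φ t ≥ Φ (2R) on [0, 2R]
  have hkey : (∫ t in (0:ℝ)..(2*R), Φ t) ≥ 2*R * Φ (2*R) := by
    have hmono : ∀ t ∈ Icc (0:ℝ) (2*R), Φ (2*R) ≤ Φ t := by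
      intro t ht
      have hsub : Φ (2*R) - Φ t = ∫ z in t..(2*R), f z :=
        intervalIntegral.integral_interval_sub_left (hfc.intervalIntegrable 0 (2*R))
          (hfc.intervalIntegrable 0 t)
      have hle : (∫ z in t..(2*R), f z) ≤ 0 := by
        have : (0:ℝ) ≤ ∫ z in t..(2*R), -f z := by
          apply intervalIntegral.integral_nonneg ht.2
          intro u hu
          have : 0 ≤ u := le_trans ht.1 hu.1
          linarith [hfnonpos u this]
        rw [intervalIntegral.integral_neg] at this
        linarith
      linarith
    have h9 : (∫ t in (0:ℝ)..(2*R), (fun _ => Φ (2*R)) t) ≤ ∫ t in (0:ℝ)..(2*R), Φ t := by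
      apply intervalIntegral.integral_mono_on (by linarith)
        (intervalIntegrable_const) (hΦc.intervalIntegrable _ _)
      exact hmono
    simpa [mul_comm] using h9
  -- put it together
  rw [hind_sq, hdouble, hA]
  have hfinal : 4*R * G (2*R) - 2 * ∫ z in (0:ℝ)..(2*R), G z = 2 * Φ (2*R) := by
    rw [hIBP]; ring
  have hc2R : c * (2*R) = 1 := by rw [hc]; field_simp
  have hS := hkey
  have h11 : 2*c^2 * (∫ t in (0:ℝ)..(2*R), Φ t) ≥ 2*c^2*(2*R*Φ (2*R)) := by
    have hcc : (0:ℝ) ≤ 2*c^2 := by positivity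
    nlinarith [mul_le_mul_of_nonneg_left hS hcc]
  have h12 : 2*c^2*(2*R*Φ (2*R)) = 2*c*Φ (2*R) := by
    linear_combination (2*c*Φ (2*R)) * hc2R
  have h13 : c * (ε - 2 * (∫ z in (0:ℝ)..(2*R), G z) + 4*R * G (2*R))
      = c*ε + 2*c*Φ (2*R) := by
    linear_combination c * hfinal
  linarith [h11, h12, h13]
end

section
/- Let ε ∈ ℝ and let G ∈ C¹(ℝ) be even with G integrable, z ↦ z G'(z) integrable, and lim_{|z|→∞} z G(z) = 0. Then lim_{R→∞} 2R · [ ε ∫_ℝ ρ_R(x)² dx + ∫_ℝ∫_ℝ (x−y) G'(x−y) ρ_R(x) ρ_R(y) dx dy ] = ε − ∫_ℝ G(z) dz. In particular, if ε < ∫_ℝ G, this quantity is negative for all sufficiently large R. -/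
open MeasureTheory Real Set Filter Topology intervalIntegral

lemma aux_sq (R c : ℝ) (hR : 0 < R) :
    (∫ x, (Set.indicator (Icc (-R) R) (fun _ => c) x)^2) = (2*R) * c^2 := by
  have h : ∀ x, (Set.indicator (Icc (-R) R) (fun _ => c) x)^2
      = Set.indicator (Icc (-R) R) (fun _ => c^2) x := by
    intro x
    by_cases hx : x ∈ Icc (-R) R <;> simp [hx]
  rw [funext h, MeasureTheory.integral_indicator measurableSet_Icc, setIntegral_const,
    measureReal_def, Real.volume_Icc, smul_eq_mul, ENNReal.toReal_ofReal (by linarith)]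
  ring

lemma aux_prod (R c z : ℝ) :
    (∫ x, Set.indicator (Icc (-R) R) (fun _ => c) x
        * Set.indicator (Icc (-R) R) (fun _ => c) (x - z))
      = c^2 * max (2*R - |z|) 0 := by
  have hmem : ∀ x, (x ∈ Icc (max (-R) (z-R)) (min R (z+R)))
      ↔ (x ∈ Icc (-R) R ∧ x - z ∈ Icc (-R) R) := by
    intro x
    simp only [Set.mem_Icc, max_le_iff, le_min_iff]
    constructor
    · rintro ⟨⟨a,b⟩,c1,d⟩; exact ⟨⟨a,c1⟩, by linarith, by linarith⟩
    · rintro ⟨⟨a,b⟩,c1,d⟩; exact ⟨⟨a, by linarith⟩, b, by linarith⟩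
  have h : ∀ x, Set.indicator (Icc (-R) R) (fun _ => c) x
      * Set.indicator (Icc (-R) R) (fun _ => c) (x - z)
      = Set.indicator (Icc (max (-R) (z-R)) (min R (z+R))) (fun _ => c^2) x := by
    intro x
    by_cases h1 : x ∈ Icc (-R) R <;> by_cases h2 : x - z ∈ Icc (-R) R
    · rw [Set.indicator_of_mem h1, Set.indicator_of_mem h2,
        Set.indicator_of_mem ((hmem x).2 ⟨h1, h2⟩)]; ring
    · simp [Set.indicator_of_notMem h2,
        Set.indicator_of_notMem (fun hm => h2 ((hmem x).1 hm).2)]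
    · simp [Set.indicator_of_notMem h1,
        Set.indicator_of_notMem (fun hm => h1 ((hmem x).1 hm).1)]
    · simp [Set.indicator_of_notMem h1,
        Set.indicator_of_notMem (fun hm => h1 ((hmem x).1 hm).1)]
  rw [funext h, MeasureTheory.integral_indicator measurableSet_Icc, setIntegral_const,
    smul_eq_mul, measureReal_def, Real.volume_Icc]
  have key : min R (z+R) - max (-R) (z-R) = 2*R - |z| := by
    rcases le_total z 0 with h'|h'
    · rw [abs_of_nonpos h', min_eq_right (by linarith), max_eq_left (by linarith)]; ring
    · rw [abs_of_nonneg h', min_eq_left (by linarith), max_eq_right (by linarith)]; ring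
  rw [key]
  rcases le_total (2*R - |z|) 0 with h'|h'
  · rw [ENNReal.ofReal_eq_zero.2 h', max_eq_right h']; simp
  · rw [ENNReal.toReal_ofReal h', max_eq_left h']; ring

lemma aux_double (G : ℝ → ℝ) (hG : ContDiff ℝ 1 G)
    (hG'int : Integrable (fun z => z * deriv G z))
    (R : ℝ) (hR : 0 < R) :
    (∫ x, ∫ y, (x - y) * deriv G (x - y) *
        Set.indicator (Icc (-R) R) (fun _ => 1/(2*R)) x *
        Set.indicator (Icc (-R) R) (fun _ => 1/(2*R)) y)
      = (1/(2*R))^2 * ∫ z, (z * deriv G z) * max (2*R - |z|) 0 := by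
  set c : ℝ := 1/(2*R) with hc
  set f : ℝ → ℝ := fun z => z * deriv G z with hf
  set ind : ℝ → ℝ := Set.indicator (Icc (-R) R) (fun _ => c) with hind
  have hfc : Continuous f := continuous_id.mul (hG.continuous_deriv le_rfl)
  have hindm : Measurable ind := measurable_const.indicator measurableSet_Icc
  have hcpos : 0 < c := by positivity
  have hindnn : ∀ x, 0 ≤ ind x := by
    intro x; by_cases hx : x ∈ Icc (-R) R <;> simp [hind, hx, hcpos.le]
  have hindle : ∀ x, ind x ≤ c := by
    intro x; by_cases hx : x ∈ Icc (-R) R <;> simp [hind, hx, hcpos.le]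
  have step1 : ∀ x, (∫ y, (x - y) * deriv G (x - y) * ind x * ind y)
      = ∫ z, ind x * (ind (x - z) * f z) := by
    intro x
    have key := MeasureTheory.integral_sub_left_eq_self
      (fun y => ind y * f (x - y)) volume x
    have e1 : (fun y => (x - y) * deriv G (x - y) * ind x * ind y)
        = fun y => ind x * (ind y * f (x - y)) := by
      funext y; simp only [hf]; ring
    calc (∫ y, (x - y) * deriv G (x - y) * ind x * ind y)
        = ind x * ∫ y, ind y * f (x - y) := by
          rw [e1, MeasureTheory.integral_const_mul]
      _ = ind x * ∫ z, ind (x - z) * f z := by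
          rw [← key]; congr 1; apply MeasureTheory.integral_congr_ae
          filter_upwards with z; rw [sub_sub_cancel]
      _ = ∫ z, ind x * (ind (x - z) * f z) :=
          (MeasureTheory.integral_const_mul _ _).symm
  simp_rw [step1]
  have hK : Integrable (fun p : ℝ × ℝ => ind p.1 * (ind (p.1 - p.2) * f p.2))
      (volume.prod volume) := by
    have hind_int : Integrable ind := by
      exact (integrableOn_const (by
        rw [Real.volume_Icc]; exact ENNReal.ofReal_ne_top)).integrable_indicator
        measurableSet_Icc
    have hmaj : Integrable (fun p : ℝ × ℝ => ind p.1 * (c * |f p.2|))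
        (volume.prod volume) := hind_int.mul_prod (hG'int.abs.const_mul c)
    refine hmaj.mono ?_ ?_
    · exact ((hindm.comp measurable_fst).mul
        ((hindm.comp (measurable_fst.sub measurable_snd)).mul
          (hfc.measurable.comp measurable_snd))).aestronglyMeasurable
    · filter_upwards with p
      rw [Real.norm_eq_abs, Real.norm_eq_abs, abs_mul, abs_mul,
        abs_of_nonneg (hindnn _), abs_of_nonneg (hindnn _)]
      have h1 : ind (p.1 - p.2) * |f p.2| ≤ c * |f p.2| :=
        mul_le_mul_of_nonneg_right (hindle _) (abs_nonneg _)
      have h2 : 0 ≤ ind p.1 * (c * |f p.2|) :=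
        mul_nonneg (hindnn _) (mul_nonneg hcpos.le (abs_nonneg _))
      rw [abs_of_nonneg h2]
      exact mul_le_mul_of_nonneg_left h1 (hindnn _)
  rw [MeasureTheory.integral_integral_swap hK]
  have step3 : ∀ z, (∫ x, ind x * (ind (x - z) * f z))
      = (f z * max (2*R - |z|) 0) * c^2 := by
    intro z
    have e2 : (fun x => ind x * (ind (x - z) * f z))
        = fun x => (ind x * ind (x - z)) * f z := by funext x; ring
    rw [e2, MeasureTheory.integral_mul_const, aux_prod R c z]
    ring
  simp_rw [step3]
  rw [MeasureTheory.integral_mul_const]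
  ring

lemma aux_ibp (G : ℝ → ℝ) (hG : ContDiff ℝ 1 G)
    (hGint : Integrable G)
    (hG'int : Integrable (fun z => z * deriv G z))
    (hdecay : Tendsto (fun z => z * G z) (cocompact ℝ) (𝓝 0)) :
    (∫ z, z * deriv G z) = - ∫ z, G z := by
  have hG' : Continuous (deriv G) := hG.continuous_deriv le_rfl
  have hpart : ∀ A : ℝ, ∫ z in (-A)..A, z * deriv G z
      = A * G A - (-A) * G (-A) - ∫ z in (-A)..A, G z := by
    intro A
    have := intervalIntegral.integral_mul_deriv_eq_deriv_mul
      (u := fun x : ℝ => x) (u' := fun _ => (1:ℝ)) (v := G) (v' := deriv G)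
      (a := -A) (b := A)
      (fun x _ => hasDerivAt_id x)
      (fun x _ => (hG.differentiable one_ne_zero).differentiableAt.hasDerivAt)
      (intervalIntegrable_const)
      (hG'.intervalIntegrable _ _)
    simpa using this
  have hL : Tendsto (fun A : ℝ => ∫ z in (-A)..A, z * deriv G z) atTop
      (𝓝 (∫ z, z * deriv G z)) :=
    intervalIntegral_tendsto_integral hG'int tendsto_neg_atTop_atBot tendsto_id
  have hT : Tendsto (fun z : ℝ => z * G z) atTop (𝓝 0) :=
    hdecay.mono_left (by rw [cocompact_eq_atBot_atTop]; exact le_sup_right)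
  have hB : Tendsto (fun z : ℝ => z * G z) atBot (𝓝 0) :=
    hdecay.mono_left (by rw [cocompact_eq_atBot_atTop]; exact le_sup_left)
  have hB' : Tendsto (fun A : ℝ => (-A) * G (-A)) atTop (𝓝 0) :=
    hB.comp tendsto_neg_atTop_atBot
  have hGI : Tendsto (fun A : ℝ => ∫ z in (-A)..A, G z) atTop (𝓝 (∫ z, G z)) :=
    intervalIntegral_tendsto_integral hGint tendsto_neg_atTop_atBot tendsto_id
  have hR : Tendsto (fun A : ℝ => A * G A - (-A) * G (-A) - ∫ z in (-A)..A, G z)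
      atTop (𝓝 (0 - 0 - ∫ z, G z)) := (hT.sub hB').sub hGI
  have := tendsto_nhds_unique hL (by simpa [hpart] using hR)
  simpa using this

lemma aux_dct (f : ℝ → ℝ) (hf : Continuous f) (hfi : Integrable f) :
    Tendsto (fun R : ℝ => ∫ z, f z * (max (2*R - |z|) 0 / (2*R))) atTop
      (𝓝 (∫ z, f z)) := by
  apply MeasureTheory.tendsto_integral_filter_of_dominated_convergence (fun z => |f z|)
  · filter_upwards with R
    exact ((hf.mul (((continuous_const.sub continuous_abs).max
      continuous_const).div_const _))).aestronglyMeasurable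
  · filter_upwards [eventually_ge_atTop (1:ℝ)] with R hR
    filter_upwards with z
    have h2R : (0:ℝ) < 2*R := by linarith
    have h1 : max (2*R - |z|) 0 / (2*R) ≤ 1 := by
      rw [div_le_one h2R]
      have := abs_nonneg z
      exact max_le (by linarith) (by linarith)
    have h0 : 0 ≤ max (2*R - |z|) 0 / (2*R) := div_nonneg (le_max_right _ _) h2R.le
    rw [norm_mul, Real.norm_eq_abs, Real.norm_eq_abs, abs_of_nonneg h0]
    calc |f z| * (max (2*R - |z|) 0 / (2*R)) ≤ |f z| * 1 :=
          mul_le_mul_of_nonneg_left h1 (abs_nonneg _)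
      _ = |f z| := mul_one _
  · exact hfi.abs
  · filter_upwards with z
    have hlim : Tendsto (fun R : ℝ => max (2*R - |z|) 0 / (2*R)) atTop (𝓝 1) := by
      have h1 : Tendsto (fun R : ℝ => 1 - |z| / (2*R)) atTop (𝓝 (1 - 0)) :=
        tendsto_const_nhds.sub
          (Tendsto.div_atTop tendsto_const_nhds
            (tendsto_id.const_mul_atTop (by norm_num)))
      have h2 : (fun R : ℝ => 1 - |z| / (2*R)) =ᶠ[atTop]
          (fun R : ℝ => max (2*R - |z|) 0 / (2*R)) := by
        filter_upwards [eventually_ge_atTop (|z| + 1)] with R hR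
        have hz := abs_nonneg z
        have h2R : (0:ℝ) < 2*R := by linarith
        rw [max_eq_left (by linarith)]
        field_simp
        rw [sub_div, mul_div_cancel_right₀ _ (by linarith : R ≠ 0)]
      simpa using h1.congr' h2
    simpa using (hlim.const_mul (f z))

/-- **Large-`R` asymptotics of the initial derivative of the second moment for
the uniform density** `ρ_R = (1/(2R)) 𝟙_{[−R,R]}`:
`2R·[ε∫ρ_R² + ∫∫(x−y)G'(x−y)ρ_R(x)ρ_R(y)] → ε − ∫G` as `R → ∞`; in
particular, if `ε < ∫G` this quantity is negative for all sufficiently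
large `R`. -/
theorem stmt13
    (ε : ℝ)
    (G : ℝ → ℝ) (hG : ContDiff ℝ 1 G)
    (hGeven : ∀ x, G (-x) = G x)
    (hGint : Integrable G)
    (hG'int : Integrable (fun z => z * deriv G z))
    (hdecay : Tendsto (fun z => z * G z) (cocompact ℝ) (𝓝 0)) :
    Tendsto (fun R : ℝ =>
        2*R * (ε * (∫ x, (Set.indicator (Icc (-R) R) (fun _ => 1/(2*R)) x)^2)
          + ∫ x, ∫ y, (x - y) * deriv G (x - y) *
              Set.indicator (Icc (-R) R) (fun _ => 1/(2*R)) x *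
              Set.indicator (Icc (-R) R) (fun _ => 1/(2*R)) y))
      atTop (𝓝 (ε - ∫ z, G z)) ∧
    (ε < (∫ z, G z) → ∀ᶠ R : ℝ in atTop,
      ε * (∫ x, (Set.indicator (Icc (-R) R) (fun _ => 1/(2*R)) x)^2)
        + (∫ x, ∫ y, (x - y) * deriv G (x - y) *
            Set.indicator (Icc (-R) R) (fun _ => 1/(2*R)) x *
            Set.indicator (Icc (-R) R) (fun _ => 1/(2*R)) y) < 0) := by
  have hfc : Continuous (fun z : ℝ => z * deriv G z) :=
    continuous_id.mul (hG.continuous_deriv le_rfl)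
  have hIBP : (∫ z, z * deriv G z) = - ∫ z, G z :=
    aux_ibp G hG hGint hG'int hdecay
  have hDCT := aux_dct (fun z : ℝ => z * deriv G z) hfc hG'int
  have heq : ∀ᶠ R : ℝ in atTop,
      2*R * (ε * (∫ x, (Set.indicator (Icc (-R) R) (fun _ => 1/(2*R)) x)^2)
        + ∫ x, ∫ y, (x - y) * deriv G (x - y) *
            Set.indicator (Icc (-R) R) (fun _ => 1/(2*R)) x *
            Set.indicator (Icc (-R) R) (fun _ => 1/(2*R)) y)
      = ε + ∫ z, (z * deriv G z) * (max (2*R - |z|) 0 / (2*R)) := by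
    filter_upwards [eventually_gt_atTop (0:ℝ)] with R hR
    rw [aux_sq R (1/(2*R)) hR, aux_double G hG hG'int R hR]
    have hpull : (∫ z, (z * deriv G z) * (max (2*R - |z|) 0 / (2*R)))
        = (∫ z, (z * deriv G z) * max (2*R - |z|) 0) / (2*R) := by
      simp_rw [← mul_div_assoc]
      exact MeasureTheory.integral_div _ _
    rw [hpull]
    have hR0 : R ≠ 0 := hR.ne'
    field_simp
  have hT1 : Tendsto (fun R : ℝ =>
      ε + ∫ z, (z * deriv G z) * (max (2*R - |z|) 0 / (2*R))) atTop
      (𝓝 (ε + ∫ z, z * deriv G z)) := tendsto_const_nhds.add hDCT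
  have main1 : Tendsto (fun R : ℝ =>
      2*R * (ε * (∫ x, (Set.indicator (Icc (-R) R) (fun _ => 1/(2*R)) x)^2)
        + ∫ x, ∫ y, (x - y) * deriv G (x - y) *
            Set.indicator (Icc (-R) R) (fun _ => 1/(2*R)) x *
            Set.indicator (Icc (-R) R) (fun _ => 1/(2*R)) y))
      atTop (𝓝 (ε - ∫ z, G z)) := by
    have : ε + (∫ z, z * deriv G z) = ε - ∫ z, G z := by rw [hIBP]; ring
    rw [← this]
    exact hT1.congr' (EventuallyEq.symm heq)
  refine ⟨main1, fun hlt => ?_⟩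
  have hneg : ε - (∫ z, G z) < 0 := by linarith
  filter_upwards [main1.eventually_lt_const hneg, eventually_gt_atTop (0:ℝ)]
    with R h1 h2
  by_contra hB
  push_neg at hB
  nlinarith
end
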